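/- arXiv:1903.03538 — 6 statements merged into one kernel-verified Lean document; each statement's English description precedes it below -/
import Mathlib

section
/- Let G=(V,A) be a finite directed acyclic graph, let B, D, E be subsets of V, and let M be a d-separator between B and D given E. Then every trail between a vertex of B and a vertex of D all of whose vertices lie in casc(B ∪ D ∪ M ∪ E) contains a vertex of M ∪ E that is not a v-structure of the trail. -/
/-- `IsTrail A n f` : `f 0, f 1, …, f n` is a trail in the directed graph with
arc relation `A` (each consecutive pair is joined by an arc in one direction or the other). -/
def IsTrail {V : Type*} (A : V → V → Prop) (n : ℕ) (f : ℕ → V) : Prop :=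
  ∀ i < n, A (f i) (f (i+1)) ∨ A (f (i+1)) (f i)

/-- `IsVStruct A n f i` : the vertex `f i` is a v-structure of the trail `f 0, …, f n`,
i.e. `i` is interior and both neighbouring arcs point towards `f i`. -/
def IsVStruct {V : Type*} (A : V → V → Prop) (n : ℕ) (f : ℕ → V) (i : ℕ) : Prop :=
  0 < i ∧ i < n ∧ A (f (i-1)) (f i) ∧ A (f (i+1)) (f i)

/-- `Cdsc A v = {v} ∪ dsc(v)` : `v` together with its descendants. -/
def Cdsc {V : Type*} (A : V → V → Prop) (v : V) : Set V :=
  {w | Relation.ReflTransGen A v w}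

/-- `Casc A S = S ∪ asc(S)` : `S` together with its ascendants. -/
def Casc {V : Type*} (A : V → V → Prop) (S : Set V) : Set V :=
  {u | ∃ s ∈ S, Relation.ReflTransGen A u s}

/-- The trail `f 0, …, f n` is active given `M` : every vertex of the trail that is not a
v-structure is not in `M`, and every v-structure `v` satisfies `cdsc(v) ∩ M ≠ ∅`. -/
def ActiveTrail {V : Type*} (A : V → V → Prop) (M : Set V) (n : ℕ) (f : ℕ → V) : Prop :=
  IsTrail A n f ∧
  (∀ i ≤ n, ¬ IsVStruct A n f i → f i ∉ M) ∧
  (∀ i ≤ n, IsVStruct A n f i → (Cdsc A (f i) ∩ M).Nonempty)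

/-- `DSep A X Y M` : `M` d-separates `X` and `Y`, i.e. no trail between a vertex of `X`
and a vertex of `Y` is active given `M`. -/
def DSep {V : Type*} (A : V → V → Prop) (X Y M : Set V) : Prop :=
  ∀ (n : ℕ) (f : ℕ → V), f 0 ∈ X → f n ∈ Y → ¬ ActiveTrail A M n f

/-- `Mb A B C E` : the Markov blanket of `B` in `C` given `E`, defined as
`{v ∈ C : v is not d-separated from B given E ∪ (C \ (B ∪ {v}))}`. -/
def Mb {V : Type*} (A : V → V → Prop) (B C E : Set V) : Set V :=
  {v | v ∈ C ∧ ¬ DSep A {v} B (E ∪ (C \ (B ∪ {v})))}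

/-- The directed graph with arc relation `A` is acyclic. -/
def Acyclic {V : Type*} (A : V → V → Prop) : Prop :=
  ∀ v, ¬ Relation.TransGen A v v

/-- `M` is a d-separator between `B` and `D` given the evidence set `E`. -/
def IsDSep {V : Type*} (A : V → V → Prop) (B D E M : Set V) : Prop :=
  DSep A B D (M ∪ E)

/-- `M` is a minimal d-separator between `B` and `D` given the evidence set `E`. -/
def IsMinDSep {V : Type*} (A : V → V → Prop) (B D E M : Set V) : Prop :=
  IsDSep A B D E M ∧ ∀ M' ⊂ M, ¬ IsDSep A B D E M'

section Aux

variable {V : Type*} {A : V → V → Prop}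

private lemma no_two_cycle (hA : Acyclic A) {x y : V} (h1 : A x y) (h2 : A y x) : False :=
  hA x (Relation.TransGen.head h1 (Relation.TransGen.single h2))

private lemma chain_rtg {k : ℕ} {q : ℕ → V} (hq : ∀ j < k, A (q j) (q (j+1)))
    {a b : ℕ} (hab : a ≤ b) (hbk : b ≤ k) :
    Relation.ReflTransGen A (q a) (q b) := by
  induction b, hab using Nat.le_induction with
  | base => exact .refl
  | succ b hb ih => exact .tail (ih (by omega)) (hq b (by omega))

private lemma exists_path {a b : V} (h : Relation.ReflTransGen A a b) :
    ∃ k, ∃ q : ℕ → V, q 0 = a ∧ q k = b ∧ ∀ j < k, A (q j) (q (j+1)) := by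
  induction h with
  | refl => exact ⟨0, fun _ => a, rfl, rfl, by omega⟩
  | @tail b c _ hbc ih =>
    obtain ⟨k, q, h0, hk, harc⟩ := ih
    refine ⟨k+1, fun j => if j ≤ k then q j else c, by simp [h0], by simp, ?_⟩
    intro j hj
    by_cases hjk : j = k
    · subst hjk
      simpa [hk] using hbc
    · have h1 : j ≤ k := by omega
      have h2 : j + 1 ≤ k := by omega
      simpa [h1, h2] using harc j (by omega)

open Classical in
private noncomputable def vset (A : V → V → Prop) (n : ℕ) (f : ℕ → V) : Finset ℕ :=
  (Finset.range (n+1)).filter (IsVStruct A n f)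

private lemma mem_vset {n : ℕ} {f : ℕ → V} {i : ℕ} :
    i ∈ vset A n f ↔ i ≤ n ∧ IsVStruct A n f i := by
  simp [vset, Finset.mem_filter, Finset.mem_range, Nat.lt_succ_iff]

end Aux

private lemma key_lemma {V : Type*} {A : V → V → Prop} (hA : Acyclic A)
    (B D E M : Set V) (hM : DSep A B D (M ∪ E)) :
    ∀ N n (f : ℕ → V), (vset A n f).card ≤ N → IsTrail A n f →
      (∀ i ≤ n, f i ∈ Casc A (B ∪ D ∪ M ∪ E)) → f 0 ∈ B → f n ∈ D →
      (∀ i ≤ n, f i ∈ M ∪ E → IsVStruct A n f i) → False := by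
  intro N
  induction N with
  | zero =>
    intro n f hcount hf hin hB hD hprop
    apply hM n f hB hD
    refine ⟨hf, fun i hi hnv hmem => hnv (hprop i hi hmem), fun i hi hv => ?_⟩
    exfalso
    have hmem : i ∈ vset A n f := mem_vset.mpr ⟨hi, hv⟩
    have := Finset.card_pos.mpr ⟨i, hmem⟩
    omega
  | succ N ih =>
    intro n f hcount hf hin hB hD hprop
    by_cases hbad : ∃ i, i ≤ n ∧ IsVStruct A n f i ∧ ¬ (Cdsc A (f i) ∩ (M ∪ E)).Nonempty
    swap
    · -- no bad v-structure: the trail is active, contradicting DSep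
      push_neg at hbad
      apply hM n f hB hD
      exact ⟨hf, fun i hi hnv hmem => hnv (hprop i hi hmem),
        fun i hi hv => hbad i hi hv⟩
    obtain ⟨i, hi, hv, hbadset⟩ := hbad
    have hdisj : ∀ w, Relation.ReflTransGen A (f i) w → w ∉ M ∪ E := by
      intro w hw hwME
      exact hbadset ⟨w, hw, hwME⟩
    have hv' := hv
    obtain ⟨i0, iLT, harcL, harcR⟩ := hv'
    have hiin : i ∈ vset A n f := mem_vset.mpr ⟨hi, hv⟩
    have hcasci := hin i hi
    simp only [Casc, Set.mem_setOf_eq] at hcasci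
    obtain ⟨s, hs, hrt⟩ := hcasci
    obtain ⟨k, q, hq0, hqk, hqarc⟩ := exists_path hrt
    have hqM : ∀ m ≤ k, q m ∉ M ∪ E := by
      intro m hm
      exact hdisj _ (hq0 ▸ chain_rtg hqarc (Nat.zero_le m) hm)
    have hsME : s ∉ M ∪ E := hqk ▸ hqM k le_rfl
    have hfiME : f i ∉ M ∪ E := hdisj _ .refl
    have hsBD : s ∈ B ∪ D := by
      rcases hs with ((h | h) | h) | h
      · exact Or.inl h
      · exact Or.inr h
      · exact absurd (Or.inl h) hsME
      · exact absurd (Or.inr h) hsME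
    rcases hsBD with hsB | hsD
    · -- s ∈ B : replace the prefix f 0 … f i by the reversed path s = q k, …, q 0 = f i
      set n' := k + (n - i) with hn'
      set g : ℕ → V := fun j => if j ≤ k then q (k - j) else f (i + (j - k)) with hgdef
      have hg1 : ∀ j ≤ k, g j = q (k - j) := by
        intro j hj; simp only [hgdef]; rw [if_pos hj]
      have hg2 : ∀ j, k ≤ j → g j = f (i + (j - k)) := by
        intro j hj
        rcases eq_or_lt_of_le hj with h | h
        · simp only [hgdef]
          rw [if_pos (le_of_eq h.symm), ← h]
          simp [hq0]
        · simp only [hgdef]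
          rw [if_neg (by omega)]
      have hgtrail : IsTrail A n' g := by
        intro j hj
        rcases lt_trichotomy j k with h | h | h
        · right
          rw [hg1 j (le_of_lt h), hg1 (j+1) h]
          have a1 := hqarc (k - j - 1) (by omega)
          have e : k - j - 1 + 1 = k - j := by omega
          rw [e] at a1
          have e2 : k - (j+1) = k - j - 1 := by omega
          rw [e2]
          exact a1
        · right
          rw [hg2 j (le_of_eq h.symm), hg2 (j+1) (by omega)]
          have e1 : i + (j - k) = i := by omega
          have e2 : i + (j + 1 - k) = i + 1 := by omega
          rw [e1, e2]
          exact harcR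
        · rw [hg2 j h.le, hg2 (j+1) (by omega)]
          have harc := hf (i + (j - k)) (by omega)
          have e : i + (j - k) + 1 = i + (j + 1 - k) := by omega
          rwa [e] at harc
      have hg0 : g 0 = s := by
        rw [hg1 0 (Nat.zero_le _)]
        simpa using hqk
      have hgn : g n' = f n := by
        rw [hg2 n' (by omega)]
        congr 1
        omega
      have hgcasc : ∀ j ≤ n', g j ∈ Casc A (B ∪ D ∪ M ∪ E) := by
        intro j hj
        rcases le_or_gt j k with h | h
        · rw [hg1 j h]
          exact ⟨s, hs, hqk ▸ chain_rtg hqarc (by omega) le_rfl⟩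
        · rw [hg2 j h.le]
          exact hin _ (by omega)
      have hgprop : ∀ j ≤ n', g j ∈ M ∪ E → IsVStruct A n' g j := by
        intro j hj hmem
        rcases le_or_gt j k with h | h
        · exact absurd hmem (hg1 j h ▸ hqM _ (by omega))
        rcases eq_or_lt_of_le (show k + 1 ≤ j by omega) with h1 | h1
        · exfalso
          rw [hg2 j h.le] at hmem
          have e : i + (j - k) = i + 1 := by omega
          rw [e] at hmem
          have hv1 := hprop (i+1) (by omega) hmem
          have a := hv1.2.2.1
          have e2 : i + 1 - 1 = i := by omega
          rw [e2] at a
          exact no_two_cycle hA a harcR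
        · rw [hg2 j h.le] at hmem
          have hmn : i + (j - k) ≤ n := by omega
          obtain ⟨m0, mLT, maL, maR⟩ := hprop _ hmn hmem
          refine ⟨by omega, by omega, ?_, ?_⟩
          · rw [hg2 (j-1) (by omega), hg2 j h.le]
            have e : i + (j - 1 - k) = i + (j - k) - 1 := by omega
            rw [e]
            exact maL
          · rw [hg2 (j+1) (by omega), hg2 j h.le]
            have e : i + (j + 1 - k) = i + (j - k) + 1 := by omega
            rw [e]
            exact maR
      have hvsub : ∀ j ∈ vset A n' g, k + 2 ≤ j ∧ (i + (j - k)) ∈ (vset A n f).erase i := by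
        intro j hj
        rw [mem_vset] at hj
        obtain ⟨hjn, j0, jLT, aL, aR⟩ := hj
        have hjk2 : k + 2 ≤ j := by
          by_contra hc
          push_neg at hc
          rcases lt_trichotomy j k with h | h | h
          · have a1 := hqarc (k - j) (by omega)
            have e : k - j + 1 = k - (j - 1) := by omega
            rw [e] at a1
            rw [hg1 (j-1) (by omega), hg1 j (by omega)] at aL
            exact no_two_cycle hA aL a1
          · have a1 := hqarc 0 (by omega)
            rw [hg1 (j-1) (by omega), hg1 j (le_of_eq h)] at aL
            have e1 : k - (j - 1) = 1 := by omega
            have e2 : k - j = 0 := by omega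
            rw [e1, e2] at aL
            exact no_two_cycle hA aL a1
          · have hj1 : j = k + 1 := by omega
            rw [hg2 (j-1) (by omega), hg2 j (by omega)] at aL
            have e1 : i + (j - 1 - k) = i := by omega
            have e2 : i + (j - k) = i + 1 := by omega
            rw [e1, e2] at aL
            exact no_two_cycle hA aL harcR
        rw [hg2 (j-1) (by omega), hg2 j (by omega)] at aL
        rw [hg2 (j+1) (by omega), hg2 j (by omega)] at aR
        refine ⟨hjk2, Finset.mem_erase.mpr ⟨by omega, mem_vset.mpr ⟨by omega, by omega, by omega, ?_, ?_⟩⟩⟩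
        · have e : i + (j - 1 - k) = i + (j - k) - 1 := by omega
          rwa [e] at aL
        · have e : i + (j + 1 - k) = i + (j - k) + 1 := by omega
          rwa [e] at aR
      have hcard : (vset A n' g).card ≤ N := by
        have hinj : Set.InjOn (fun j => i + (j - k)) (vset A n' g) := by
          intro a ha b hb hab
          have h1 := (hvsub a ha).1
          have h2 := (hvsub b hb).1
          simp only at hab
          omega
        have hle := Finset.card_le_card_of_injOn _ (fun j hj => (hvsub j hj).2) hinj
        have herase := Finset.card_erase_of_mem hiin
        omega
      exact ih n' g hcard hgtrail hgcasc (hg0 ▸ hsB) (hgn ▸ hD) hgprop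
    · -- s ∈ D : replace the suffix f i … f n by the path q 0 = f i, …, q k = s
      set n' := i + k with hn'
      set g : ℕ → V := fun j => if j ≤ i then f j else q (j - i) with hgdef
      have hg1 : ∀ j ≤ i, g j = f j := by
        intro j hj; simp only [hgdef]; rw [if_pos hj]
      have hg2 : ∀ j, i ≤ j → g j = q (j - i) := by
        intro j hj
        rcases eq_or_lt_of_le hj with h | h
        · simp only [hgdef]
          rw [if_pos (le_of_eq h.symm), ← h]
          simp [hq0]
        · simp only [hgdef]
          rw [if_neg (by omega)]
      have hgtrail : IsTrail A n' g := by
        intro j hj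
        rcases lt_trichotomy j i with h | h | h
        · rw [hg1 j (by omega), hg1 (j+1) (by omega)]
          exact hf j (by omega)
        · left
          rw [hg2 j (le_of_eq h.symm), hg2 (j+1) (by omega)]
          have a1 := hqarc 0 (by omega)
          have e1 : j - i = 0 := by omega
          have e2 : j + 1 - i = 1 := by omega
          rw [e1, e2]
          exact a1
        · left
          rw [hg2 j h.le, hg2 (j+1) (by omega)]
          have a1 := hqarc (j - i) (by omega)
          have e : j - i + 1 = j + 1 - i := by omega
          rwa [e] at a1
      have hg0 : g 0 = f 0 := hg1 0 (by omega)
      have hgn : g n' = s := by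
        rw [hg2 n' (by omega)]
        have e : n' - i = k := by omega
        rw [e, hqk]
      have hgcasc : ∀ j ≤ n', g j ∈ Casc A (B ∪ D ∪ M ∪ E) := by
        intro j hj
        rcases le_or_gt j i with h | h
        · rw [hg1 j h]
          exact hin j (by omega)
        · rw [hg2 j h.le]
          exact ⟨s, hs, hqk ▸ chain_rtg hqarc (by omega) le_rfl⟩
      have hgprop : ∀ j ≤ n', g j ∈ M ∪ E → IsVStruct A n' g j := by
        intro j hj hmem
        by_cases hji : i < j
        · exact absurd hmem (hg2 j hji.le ▸ hqM (j - i) (by omega))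
        by_cases hji2 : j = i
        · rw [hji2, hg1 i le_rfl] at hmem
          exact absurd hmem hfiME
        by_cases hji3 : j = i - 1
        · exfalso
          rw [hji3, hg1 (i-1) (by omega)] at hmem
          have hv1 := hprop (i-1) (by omega) hmem
          have a := hv1.2.2.2
          have e : i - 1 + 1 = i := by omega
          rw [e] at a
          exact no_two_cycle hA a harcL
        have hj2 : j + 2 ≤ i := by omega
        rw [hg1 j (by omega)] at hmem
        obtain ⟨m0, mLT, maL, maR⟩ := hprop j (by omega) hmem
        refine ⟨m0, by omega, ?_, ?_⟩
        · rw [hg1 (j-1) (by omega), hg1 j (by omega)]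
          exact maL
        · rw [hg1 (j+1) (by omega), hg1 j (by omega)]
          exact maR
      have hvsub : ∀ j ∈ vset A n' g, j ∈ (vset A n f).erase i := by
        intro j hj
        rw [mem_vset] at hj
        obtain ⟨hjn, j0, jLT, aL, aR⟩ := hj
        have hji : j + 2 ≤ i := by
          by_contra hc
          push_neg at hc
          rcases lt_trichotomy j i with h | h | h
          · rw [hg1 (j+1) (by omega), hg1 j (by omega)] at aR
            have e1 : j + 1 = i := by omega
            have e2 : j = i - 1 := by omega
            rw [e1, e2] at aR
            exact no_two_cycle hA aR harcL
          · rw [hg2 (j+1) (by omega), hg2 j (le_of_eq h.symm)] at aR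
            have a1 := hqarc 0 (by omega)
            have e1 : j + 1 - i = 1 := by omega
            have e2 : j - i = 0 := by omega
            rw [e1, e2] at aR
            exact no_two_cycle hA aR a1
          · rw [hg2 (j+1) (by omega), hg2 j (by omega)] at aR
            have a1 := hqarc (j - i) (by omega)
            have e : j - i + 1 = j + 1 - i := by omega
            rw [e] at a1
            exact no_two_cycle hA a1 aR
        rw [hg1 (j-1) (by omega), hg1 j (by omega)] at aL
        rw [hg1 (j+1) (by omega), hg1 j (by omega)] at aR
        exact Finset.mem_erase.mpr ⟨by omega, mem_vset.mpr ⟨by omega, j0, by omega, aL, aR⟩⟩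
      have hcard : (vset A n' g).card ≤ N := by
        have hle := Finset.card_le_card (fun j hj => hvsub j hj)
        have herase := Finset.card_erase_of_mem hiin
        omega
      exact ih n' g hcard hgtrail hgcasc (hg0 ▸ hB) (hgn ▸ hsD) hgprop

theorem stmt_8 {V : Type*} [Fintype V] (A : V → V → Prop) (hA : Acyclic A)
    (B D E M : Set V) (hM : IsDSep A B D E M)
    (n : ℕ) (f : ℕ → V) (hf : IsTrail A n f)
    (hin : ∀ i ≤ n, f i ∈ Casc A (B ∪ D ∪ M ∪ E))
    (hB : f 0 ∈ B) (hD : f n ∈ D) :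
    ∃ i ≤ n, f i ∈ M ∪ E ∧ ¬ IsVStruct A n f i := by
  by_contra h
  push_neg at h
  exact key_lemma hA B D E M hM (vset A n f).card n f le_rfl hf hin hB hD
    (fun i hi hmem => h i hi hmem)
end

section
/- Let G=(V,A) be a finite directed acyclic graph, let B, D, E be subsets of V, let M be a d-separator between B and D given E, and let N ⊆ casc(B ∪ D ∪ M ∪ E). Then M ∪ N is a d-separator between B and D given E. -/
/-! A trail from `B` to `D` that is active given `M ∪ N ∪ E` fails to be active given `M ∪ E` only
at v-structures all of whose descendants in `M ∪ N ∪ E` lie in `N`. Such a v-structure has a directed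
path, avoiding `M ∪ E`, into `B` or `D`, because `N ⊆ casc(B ∪ D ∪ M ∪ E)`; call it a detour into
`B` or into `D` (the two endpoints of the trail are trivial detours). Take the first detour into `D`
and the last detour into `B` before it: the piece of the trail between them, prolonged by the two
detours, is a trail from `B` to `D` that is active given `M ∪ E`, since acyclicity keeps the vertices
of a detour from becoming v-structures. -/

section DSeparation

variable {V : Type*} {A : V → V → Prop} {K : Set V} {n : ℕ} {f : ℕ → V}

def ActiveAt (A : V → V → Prop) (K : Set V) (n : ℕ) (f : ℕ → V) (j : ℕ) : Prop :=
  (¬ IsVStruct A n f j → f j ∉ K) ∧ (IsVStruct A n f j → (Cdsc A (f j) ∩ K).Nonempty)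

-- The start vertex itself may lie in `K`.
def ReachesAvoiding (A : V → V → Prop) (K : Set V) : V → V → Prop :=
  Relation.ReflTransGen fun u w => A u w ∧ w ∉ K

theorem Acyclic.not_arc_of_arc (hA : Acyclic A) {x y : V} (hxy : A x y) : ¬ A y x := fun hyx =>
  hA x (.head hxy (.single hyx))

theorem activeTrail_iff : ActiveTrail A K n f ↔ IsTrail A n f ∧ ∀ j ≤ n, ActiveAt A K n f j := by
  simp only [ActiveTrail, ActiveAt, imp_and, forall_and]

theorem isVStruct_congr {m j k : ℕ} {g : ℕ → V} (hpos : 0 < j ↔ 0 < k) (hlt : j < n ↔ k < m)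
    (hprev : f (j - 1) = g (k - 1)) (hcur : f j = g k) (hnext : f (j + 1) = g (k + 1)) :
    IsVStruct A n f j ↔ IsVStruct A m g k := by
  simp only [IsVStruct, hpos, hlt, hprev, hcur, hnext]

theorem isVStruct_reverse {j : ℕ} (hj : j ≤ n) :
    IsVStruct A n (fun k => f (n - k)) j ↔ IsVStruct A n f (n - j) := by
  simp only [IsVStruct]
  rcases Nat.eq_zero_or_pos j with rfl | hj0
  · simp
  rw [show n - (j - 1) = n - j + 1 by omega, show n - (j + 1) = n - j - 1 by omega]
  constructor
  · rintro ⟨-, hjn, hprev, hnext⟩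
    exact ⟨by omega, by omega, hnext, hprev⟩
  · rintro ⟨hjn, -, hprev, hnext⟩
    exact ⟨hj0, by omega, hnext, hprev⟩

theorem ActiveAt.congr {m j k : ℕ} {g : ℕ → V} (h : ActiveAt A K n f j)
    (hv : IsVStruct A n f j ↔ IsVStruct A m g k) (he : f j = g k) : ActiveAt A K m g k := by
  unfold ActiveAt at h ⊢
  rwa [← hv, ← he]

theorem activeAt_of_not_isVStruct {j : ℕ} (hv : ¬ IsVStruct A n f j) (hK : f j ∉ K) :
    ActiveAt A K n f j :=
  ⟨fun _ => hK, fun h => absurd h hv⟩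

theorem ActiveAt.not_mem_of_endpoint {j : ℕ} (h : ActiveAt A K n f j) (hj : j = 0 ∨ n ≤ j) :
    f j ∉ K :=
  h.1 fun hv => by have := hv.1; have := hv.2.1; omega

theorem ActiveTrail.snoc (hA : Acyclic A) (hf : ActiveTrail A K n f) {v : V} (hv : A (f n) v)
    (hvK : v ∉ K) : ActiveTrail A K (n + 1) (fun j => if j ≤ n then f j else v) := by
  set g : ℕ → V := fun j => if j ≤ n then f j else v
  have hg : ∀ j ≤ n, g j = f j := fun j hj => if_pos hj
  have hgv : g (n + 1) = v := if_neg (by omega)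
  rw [activeTrail_iff] at hf ⊢
  obtain ⟨htr, hact⟩ := hf
  refine ⟨fun j hj => ?_, fun j hj => ?_⟩
  · rcases Nat.lt_or_ge j n with hjn | hjn
    · rw [hg j hjn.le, hg (j + 1) hjn]
      exact htr j hjn
    · obtain rfl : j = n := by omega
      rw [hg j le_rfl, hgv]
      exact .inl hv
  rcases Nat.lt_or_ge j n with hjn | hjn
  · exact (hact j hjn.le).congr (isVStruct_congr Iff.rfl (iff_of_true hjn (by omega))
      (hg _ (by omega)).symm (hg j hjn.le).symm (hg _ hjn).symm) (hg j hjn.le).symm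
  rcases (show j = n ∨ j = n + 1 by omega) with rfl | rfl
  · refine activeAt_of_not_isVStruct (fun hvs => ?_) ?_
    · have hback := hvs.2.2.2
      rw [hgv, hg j le_rfl] at hback
      exact hA.not_arc_of_arc hv hback
    · rw [hg j le_rfl]
      exact (hact j le_rfl).not_mem_of_endpoint (.inr le_rfl)
  · exact activeAt_of_not_isVStruct (fun hvs => (lt_irrefl _ hvs.2.1)) (hgv ▸ hvK)

theorem ActiveTrail.exists_extend (hA : Acyclic A) (hf : ActiveTrail A K n f) {d : V}
    (hd : ReachesAvoiding A K (f n) d) :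
    ∃ m g, g 0 = f 0 ∧ g m = d ∧ ActiveTrail A K m g := by
  induction hd with
  | refl => exact ⟨n, f, rfl, rfl, hf⟩
  | tail _ hbc ih =>
    obtain ⟨m, g, hg0, hgm, hg⟩ := ih
    refine ⟨m + 1, _, ?_, ?_, hg.snoc hA (hgm ▸ hbc.1) hbc.2⟩ <;> simp [hg0]

theorem ActiveTrail.reverse (hf : ActiveTrail A K n f) :
    ActiveTrail A K n (fun j => f (n - j)) := by
  rw [activeTrail_iff] at hf ⊢
  obtain ⟨htr, hact⟩ := hf
  refine ⟨fun j hj => ?_, fun j hj =>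
    (hact _ (Nat.sub_le n j)).congr (isVStruct_reverse hj).symm rfl⟩
  have harc := htr (n - (j + 1)) (by omega)
  rw [show n - (j + 1) + 1 = n - j by omega] at harc
  exact harc.symm

theorem IsTrail.activeTrail_segment (htr : IsTrail A n f) {i i' : ℕ} (hii' : i ≤ i')
    (hi'n : i' ≤ n) (hi : f i ∉ K) (hi' : f i' ∉ K)
    (hgap : ∀ j, i < j → j < i' → ActiveAt A K n f j) :
    ActiveTrail A K (i' - i) (fun j => f (i + j)) := by
  rw [activeTrail_iff]
  refine ⟨fun j hj => htr (i + j) (by omega), fun j hj => ?_⟩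
  by_cases hint : 0 < j ∧ j < i' - i
  · exact (hgap (i + j) (by omega) (by omega)).congr
      (isVStruct_congr (iff_of_true (by omega) hint.1) (iff_of_true (by omega) hint.2)
        (congrArg f (by omega)) rfl rfl) rfl
  refine activeAt_of_not_isVStruct (fun hv => hint ⟨hv.1, hv.2.1⟩) ?_
  rcases (show j = 0 ∨ j = i' - i by omega) with rfl | rfl
  · simpa using hi
  · simpa [Nat.add_sub_cancel' hii'] using hi'

theorem IsTrail.not_dSep (hA : Acyclic A) (htr : IsTrail A n f) {X Y : Set V} {i i' : ℕ}
    (hii' : i ≤ i') (hi'n : i' ≤ n) (hi : f i ∉ K) (hi' : f i' ∉ K) {x y : V} (hx : x ∈ X)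
    (hy : y ∈ Y) (hix : ReachesAvoiding A K (f i) x) (hi'y : ReachesAvoiding A K (f i') y)
    (hgap : ∀ j, i < j → j < i' → ActiveAt A K n f j) : ¬ DSep A X Y K := by
  intro hsep
  obtain ⟨m, g, hg0, hgm, hg⟩ := (htr.activeTrail_segment hii' hi'n hi hi' hgap).exists_extend hA
    (by simpa [Nat.add_sub_cancel' hii'] using hi'y)
  obtain ⟨m', h, hh0, hhm, hh⟩ := hg.reverse.exists_extend hA (by simpa [hg0] using hix)
  exact hsep m' (fun j => h (m' - j)) (by simpa [hhm]) (by simpa [hh0, hgm]) hh.reverse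

theorem reachesAvoiding_of_not_nonempty {v s : V} (hK : ¬ (Cdsc A v ∩ K).Nonempty)
    (h : Relation.ReflTransGen A v s) : ReachesAvoiding A K v s := by
  induction h with
  | refl => exact .refl
  | tail hvb hbc ih => exact ih.tail ⟨hbc, fun hc => hK ⟨_, hvb.tail hbc, hc⟩⟩

theorem ActiveAt.of_union_casc {B D M N E : Set V} {j : ℕ} (hN : N ⊆ Casc A (B ∪ D ∪ M ∪ E))
    (h : ActiveAt A (M ∪ N ∪ E) n f j) :
    ActiveAt A (M ∪ E) n f j ∨
      f j ∉ M ∪ E ∧ ∃ s ∈ B ∪ D, ReachesAvoiding A (M ∪ E) (f j) s := by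
  have hsub : M ∪ E ⊆ M ∪ N ∪ E := Set.union_subset_union_left E Set.subset_union_left
  by_cases hv : IsVStruct A n f j
  swap
  · exact .inl (activeAt_of_not_isVStruct hv fun hK => h.1 hv (hsub hK))
  by_cases hK : (Cdsc A (f j) ∩ (M ∪ E)).Nonempty
  · exact .inl ⟨fun hv' => absurd hv hv', fun _ => hK⟩
  obtain ⟨w, hjw, hw⟩ := h.2 hv
  have hwN : w ∈ N := by
    have hwK : w ∉ M ∪ E := fun hwK => hK ⟨w, hjw, hwK⟩
    simp only [Set.mem_union] at hw hwK
    tauto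
  obtain ⟨s, hs, hws⟩ := hN hwN
  have hjs := hjw.trans hws
  have hsK : s ∉ M ∪ E := fun hsK => hK ⟨s, hjs, hsK⟩
  refine .inr ⟨fun hjK => hK ⟨f j, .refl, hjK⟩, s, ?_, reachesAvoiding_of_not_nonempty hK hjs⟩
  simp only [Set.mem_union] at hs hsK ⊢
  tauto

end DSeparation

theorem exists_gap {P Q : ℕ → Prop} {n : ℕ} (hP : P 0) (hQ : Q n) :
    ∃ i i', i ≤ i' ∧ i' ≤ n ∧ P i ∧ Q i' ∧ ∀ j, i < j → j < i' → ¬ P j ∧ ¬ Q j := by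
  classical
  exact ⟨Nat.findGreatest P (Nat.find ⟨n, hQ⟩), Nat.find ⟨n, hQ⟩, Nat.findGreatest_le _,
    Nat.find_min' _ hQ, Nat.findGreatest_spec (Nat.zero_le _) hP, Nat.find_spec _,
    fun j hij hji => ⟨Nat.findGreatest_is_greatest hij hji.le, Nat.find_min _ hji⟩⟩

theorem stmt_9_general {V : Type*} (A : V → V → Prop) (hA : Acyclic A)
    (B D E M N : Set V) (hM : IsDSep A B D E M)
    (hN : N ⊆ Casc A (B ∪ D ∪ M ∪ E)) :
    IsDSep A B D E (M ∪ N) := by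
  intro n f hf0 hfn hact
  obtain ⟨htr, hact⟩ := activeTrail_iff.mp hact
  have hsub : M ∪ E ⊆ M ∪ N ∪ E := Set.union_subset_union_left E Set.subset_union_left
  have hf0K : f 0 ∉ M ∪ E := fun hK =>
    (hact 0 n.zero_le).not_mem_of_endpoint (.inl rfl) (hsub hK)
  have hfnK : f n ∉ M ∪ E := fun hK =>
    (hact n le_rfl).not_mem_of_endpoint (.inr le_rfl) (hsub hK)
  obtain ⟨i, i', hii', hi'n, ⟨hiK, x, hx, hix⟩, ⟨hi'K, y, hy, hi'y⟩, hgap⟩ :=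
    exists_gap (P := fun j => f j ∉ M ∪ E ∧ ∃ x ∈ B, ReachesAvoiding A (M ∪ E) (f j) x)
      (Q := fun j => f j ∉ M ∪ E ∧ ∃ y ∈ D, ReachesAvoiding A (M ∪ E) (f j) y)
      ⟨hf0K, f 0, hf0, .refl⟩ ⟨hfnK, f n, hfn, .refl⟩
  refine htr.not_dSep hA hii' hi'n hiK hi'K hx hy hix hi'y (fun j hij hji => ?_) hM
  obtain ⟨hP, hQ⟩ := hgap j hij hji
  rcases (hact j (by omega)).of_union_casc hN with h | ⟨hjK, s, hs | hs, hjs⟩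
  · exact h
  · exact absurd ⟨hjK, s, hs, hjs⟩ hP
  · exact absurd ⟨hjK, s, hs, hjs⟩ hQ

theorem stmt_9 {V : Type*} [Fintype V] (A : V → V → Prop) (hA : Acyclic A)
    (B D E M N : Set V) (hM : IsDSep A B D E M)
    (hN : N ⊆ Casc A (B ∪ D ∪ M ∪ E)) :
    IsDSep A B D E (M ∪ N) :=
  stmt_9_general A hA B D E M N hM hN
end

section
/- Let G=(V,A) be a finite directed acyclic graph, let B, D, E be subsets of V, and let M be a d-separator between B and D given E. Then M ∩ casc(B ∪ D ∪ E) is also a d-separator between B and D given E. -/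
lemma mem_casc_of_mem {V : Type*} {A : V → V → Prop} {S : Set V} {s : V} (hs : s ∈ S) :
    s ∈ Casc A S := ⟨s, hs, Relation.ReflTransGen.refl⟩

lemma casc_step {V : Type*} {A : V → V → Prop} {S : Set V} {u v : V}
    (h : A u v) (hv : v ∈ Casc A S) : u ∈ Casc A S := by
  obtain ⟨s, hs, hvs⟩ := hv
  exact ⟨s, hs, Relation.ReflTransGen.head h hvs⟩

lemma casc_subset {V : Type*} {A : V → V → Prop} {S T : Set V} (h : S ⊆ Casc A T) :
    Casc A S ⊆ Casc A T := by
  rintro u ⟨s, hs, hus⟩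
  obtain ⟨t, ht, hst⟩ := h hs
  exact ⟨t, ht, hus.trans hst⟩

lemma trail_fwd {V : Type*} {A : V → V → Prop} {Z S : Set V} {n : ℕ} {f : ℕ → V}
    (hact : ActiveTrail A Z n f) (hn : f n ∈ S) (hZ : Z ⊆ S) :
    ∀ j i, i + j = n → i < n → A (f i) (f (i+1)) → f (i+1) ∈ Casc A S := by
  intro j
  induction j with
  | zero => intro i h1 h2 _; omega
  | succ j ih =>
    intro i h1 h2 harc
    by_cases hin : i + 1 = n
    · rw [hin]; exact mem_casc_of_mem hn
    · have hlt : i + 1 < n := by omega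
      rcases hact.1 (i+1) hlt with h | h
      · exact casc_step h (ih (i+1) (by omega) hlt h)
      · have hvs : IsVStruct A n f (i+1) := ⟨Nat.succ_pos i, hlt, by simpa using harc, h⟩
        obtain ⟨z, hz1, hz2⟩ := hact.2.2 (i+1) (le_of_lt hlt) hvs
        exact ⟨z, hZ hz2, hz1⟩

lemma trail_bwd {V : Type*} {A : V → V → Prop} {Z S : Set V} {n : ℕ} {f : ℕ → V}
    (hact : ActiveTrail A Z n f) (h0 : f 0 ∈ S) (hZ : Z ⊆ S) :
    ∀ i, i + 1 ≤ n → A (f (i+1)) (f i) → f i ∈ Casc A S := by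
  intro i
  induction i with
  | zero => intro _ _; exact mem_casc_of_mem h0
  | succ i ih =>
    intro h1 harc
    rcases hact.1 i (by omega) with h | h
    · have hvs : IsVStruct A n f (i+1) := ⟨Nat.succ_pos i, by omega, by simpa using h, harc⟩
      obtain ⟨z, hz1, hz2⟩ := hact.2.2 (i+1) (by omega) hvs
      exact ⟨z, hZ hz2, hz1⟩
    · exact casc_step h (ih (by omega) h)

lemma trail_vertex_mem {V : Type*} {A : V → V → Prop} {Z S : Set V} {n : ℕ} {f : ℕ → V}
    (hact : ActiveTrail A Z n f) (h0 : f 0 ∈ S) (hn : f n ∈ S) (hZ : Z ⊆ S) :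
    ∀ i ≤ n, f i ∈ Casc A S := by
  intro i hi
  rcases Nat.eq_zero_or_pos i with rfl | hpos
  · exact mem_casc_of_mem h0
  rcases eq_or_lt_of_le hi with rfl | hlt
  · exact mem_casc_of_mem hn
  by_cases hvs : IsVStruct A n f i
  · obtain ⟨z, hz1, hz2⟩ := hact.2.2 i hi hvs
    exact ⟨z, hZ hz2, hz1⟩
  · have hnb : ¬ A (f (i-1)) (f i) ∨ ¬ A (f (i+1)) (f i) := by
      by_contra hc
      push_neg at hc
      exact hvs ⟨hpos, hlt, hc.1, hc.2⟩
    have hi1 : i - 1 + 1 = i := by omega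
    rcases hnb with h | h
    · rcases hact.1 (i-1) (by omega) with h' | h'
      · rw [hi1] at h'; exact absurd h' h
      · rw [hi1] at h'
        exact casc_step h' (trail_bwd hact h0 hZ (i-1) (by omega) (by rw [hi1]; exact h'))
    · rcases hact.1 i hlt with h' | h'
      · exact casc_step h' (trail_fwd hact hn hZ (n - i) i (by omega) hlt h')
      · exact absurd h' h

theorem stmt_10 {V : Type*} [Fintype V] (A : V → V → Prop) (hA : Acyclic A)
    (B D E M : Set V) (hM : IsDSep A B D E M) :
    IsDSep A B D E (M ∩ Casc A (B ∪ D ∪ E)) := by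
  intro n f hB hD hact
  set C := Casc A (B ∪ D ∪ E) with hC
  set Z := (M ∩ C) ∪ E with hZdef
  -- every vertex of the trail lies in C
  have hsub : ({f 0} ∪ {f n} ∪ Z : Set V) ⊆ C := by
    rintro x (((rfl : x = f 0) | (rfl : x = f n)) | hx)
    · exact mem_casc_of_mem (Or.inl (Or.inl hB))
    · exact mem_casc_of_mem (Or.inl (Or.inr hD))
    · rcases hx with ⟨_, hx⟩ | hx
      · exact hx
      · exact mem_casc_of_mem (Or.inr hx)
  have hvert : ∀ i ≤ n, f i ∈ C := by
    intro i hi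
    exact casc_subset hsub (trail_vertex_mem hact (by left; left; rfl)
      (by left; right; rfl) (by intro x hx; right; exact hx) i hi)
  -- the trail is active given M ∪ E
  refine hM n f hB hD ⟨hact.1, ?_, ?_⟩
  · intro i hi hnvs
    have h1 := hact.2.1 i hi hnvs
    rintro (hmem | hmem)
    · exact h1 (Or.inl ⟨hmem, hvert i hi⟩)
    · exact h1 (Or.inr hmem)
  · intro i hi hvs
    obtain ⟨z, hz1, hz2⟩ := hact.2.2 i hi hvs
    refine ⟨z, hz1, ?_⟩
    rcases hz2 with ⟨hz2, _⟩ | hz2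
    · exact Or.inl hz2
    · exact Or.inr hz2
end

section
/- Let G=(V,A) be a finite directed acyclic graph, let B, D, E be subsets of V, let M be a d-separator between B and D given E, and let x be a vertex in casc(B ∪ D ∪ M ∪ E). Then at least one of the following holds: x is d-separated from B given M ∪ E, or x is d-separated from D given M ∪ E. -/
/-- Extract a finite directed path from `Relation.ReflTransGen`. -/
lemma exists_path_fun {V : Type*} {A : V → V → Prop} {u v : V}
    (h : Relation.ReflTransGen A u v) :
    ∃ (k : ℕ) (f : ℕ → V), f 0 = u ∧ f k = v ∧ ∀ i < k, A (f i) (f (i+1)) := by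
  induction h with
  | refl => exact ⟨0, fun _ => u, rfl, rfl, fun i hi => absurd hi (by omega)⟩
  | @tail b c hab hbc ih =>
    obtain ⟨k, f, h0, hk, hstep⟩ := ih
    refine ⟨k + 1, fun i => if i ≤ k then f i else c, by simp [h0], by simp, ?_⟩
    intro i hi
    by_cases hik : i < k
    · simpa [hik.le, (by omega : i + 1 ≤ k)] using hstep i hik
    · have : i = k := by omega
      subst this
      simpa [hk] using hbc

/-- Along a directed path, all vertices are reachable from the start. -/
lemma path_reaches {V : Type*} {A : V → V → Prop} {k : ℕ} {f : ℕ → V}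
    (hstep : ∀ i < k, A (f i) (f (i+1))) :
    ∀ i ≤ k, Relation.ReflTransGen A (f 0) (f i) := by
  intro i hi
  induction i with
  | zero => exact Relation.ReflTransGen.refl
  | succ j ih =>
    exact Relation.ReflTransGen.tail (ih (by omega)) (hstep j (by omega))

/-- A directed path avoiding `M` is an active trail (in an acyclic graph). -/
lemma path_active {V : Type*} {A : V → V → Prop} (hA : Acyclic A) {M : Set V}
    {k : ℕ} {f : ℕ → V} (hstep : ∀ i < k, A (f i) (f (i+1)))
    (hM : ∀ i ≤ k, f i ∉ M) : ActiveTrail A M k f := by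
  have hnv : ∀ i, ¬ IsVStruct A k f i := by
    rintro i ⟨h0, hik, -, h2⟩
    exact hA (f i) (Relation.TransGen.head (hstep i hik) (Relation.TransGen.single h2))
  exact ⟨fun i hi => Or.inl (hstep i hi), fun i hi _ => hM i hi,
    fun i _ hv => absurd hv (hnv i)⟩

/-- Concatenation of two active trails sharing their starting vertex:
the reversal of `p` followed by `q`. -/
lemma concat_active {V : Type*} {A : V → V → Prop} {M : Set V} {m n : ℕ} {p q : ℕ → V}
    (hp : ActiveTrail A M m p) (hq : ActiveTrail A M n q) (hpq : p 0 = q 0)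
    (H : 0 < m → 0 < n → A (p 1) (p 0) → A (q 1) (q 0) → (Cdsc A (p 0) ∩ M).Nonempty) :
    ActiveTrail A M (m + n) (fun i => if i ≤ m then p (m - i) else q (i - m)) := by
  set g : ℕ → V := fun i => if i ≤ m then p (m - i) else q (i - m) with hg
  have hg1 : ∀ i ≤ m, g i = p (m - i) := fun i hi => by simp [hg, hi]
  have hg2 : ∀ i, m ≤ i → g i = q (i - m) := by
    intro i hi
    by_cases h : i ≤ m
    · have : i = m := le_antisymm h hi
      subst this
      simp [hg, hpq]
    · simp [hg, h]
  have hgm : g m = p 0 := by rw [hg1 m le_rfl, Nat.sub_self]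
  have htrail : IsTrail A (m + n) g := by
    intro i hi
    by_cases him : i < m
    · rw [hg1 i him.le, hg1 (i+1) (by omega)]
      have e1 : m - (i+1) = m - i - 1 := by omega
      have e2 : m - i - 1 + 1 = m - i := by omega
      rw [e1]
      have := hp.1 (m - i - 1) (by omega)
      rw [e2] at this
      exact this.symm
    · rw [hg2 i (by omega), hg2 (i+1) (by omega)]
      have := hq.1 (i - m) (by omega)
      rwa [show i - m + 1 = i + 1 - m by omega] at this
  have hv1 : ∀ i, 0 < i → i < m → (IsVStruct A (m+n) g i ↔ IsVStruct A m p (m-i)) := by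
    intro i h0 him
    have e0 : g i = p (m - i) := hg1 i him.le
    have em : g (i-1) = p (m - i + 1) := by
      rw [hg1 (i-1) (by omega)]; all_goals (congr 1 <;> first | omega | skip)
    have ep : g (i+1) = p (m - i - 1) := by
      rw [hg1 (i+1) (by omega)]; all_goals (congr 1 <;> first | omega | skip)
    constructor
    · rintro ⟨-, -, ha, hb⟩
      rw [em, e0] at ha; rw [ep, e0] at hb
      exact ⟨by omega, by omega, hb, ha⟩
    · rintro ⟨-, -, ha, hb⟩
      refine ⟨h0, by omega, ?_, ?_⟩
      · rw [em, e0]; exact hb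
      · rw [ep, e0]; exact ha
  have hv2 : ∀ i, m < i → i < m + n → (IsVStruct A (m+n) g i ↔ IsVStruct A n q (i-m)) := by
    intro i him hin
    have e0 : g i = q (i - m) := hg2 i him.le
    have em : g (i-1) = q (i - m - 1) := by
      rw [hg2 (i-1) (by omega)]; all_goals (congr 1 <;> first | omega | skip)
    have ep : g (i+1) = q (i - m + 1) := by
      rw [hg2 (i+1) (by omega)]; all_goals (congr 1 <;> first | omega | skip)
    constructor
    · rintro ⟨-, -, ha, hb⟩
      rw [em, e0] at ha; rw [ep, e0] at hb
      exact ⟨by omega, by omega, ha, hb⟩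
    · rintro ⟨-, -, ha, hb⟩
      refine ⟨by omega, by omega, ?_, ?_⟩
      · rw [em, e0]; exact ha
      · rw [ep, e0]; exact hb
  refine ⟨htrail, ?_, ?_⟩
  · intro i hi hnv
    rcases lt_trichotomy i m with him | him | him
    · rw [hg1 i him.le]
      rcases Nat.eq_zero_or_pos i with h0 | h0
      · subst h0
        rw [Nat.sub_zero]
        exact hp.2.1 m le_rfl (fun h => absurd h.2.1 (lt_irrefl m))
      · exact hp.2.1 (m-i) (by omega) (fun h => hnv ((hv1 i h0 him).mpr h))
    · rw [him, hgm]
      exact hp.2.1 0 (Nat.zero_le m) (fun h => absurd h.1 (lt_irrefl 0))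
    · rw [hg2 i him.le]
      rcases eq_or_lt_of_le hi with hin | hin
      · rw [hin, Nat.add_sub_cancel_left]
        exact hq.2.1 n le_rfl (fun h => absurd h.2.1 (lt_irrefl n))
      · exact hq.2.1 (i-m) (by omega) (fun h => hnv ((hv2 i him hin).mpr h))
  · intro i hi hv
    rcases lt_trichotomy i m with him | him | him
    · rw [hg1 i him.le]
      exact hp.2.2 (m-i) (by omega) ((hv1 i hv.1 him).mp hv)
    · obtain ⟨h0, hmn, ha, hb⟩ := hv
      rw [him] at ha hb h0 hmn ⊢
      rw [hgm] at ha hb ⊢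
      have em : g (m-1) = p 1 := by rw [hg1 (m-1) (by omega)]; all_goals (congr 1 <;> first | omega | skip)
      have ep : g (m+1) = q 1 := by rw [hg2 (m+1) (by omega)]; all_goals (congr 1 <;> first | omega | skip)
      rw [em] at ha; rw [ep] at hb
      exact H h0 (by omega) ha (hpq ▸ hb)
    · rw [hg2 i him.le]
      exact hq.2.2 (i-m) (by omega) ((hv2 i him hv.2.1).mp hv)

lemma concat_start {V : Type*} {m : ℕ} (p q : ℕ → V) :
    (if 0 ≤ m then p (m - 0) else q (0 - m)) = p m := by simp

lemma concat_end {V : Type*} {m n : ℕ} {p q : ℕ → V} (hpq : p 0 = q 0) :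
    (if m + n ≤ m then p (m - (m + n)) else q (m + n - m)) = q n := by
  rcases Nat.eq_zero_or_pos n with h | h
  · subst h; simp [hpq]
  · rw [if_neg (by omega), Nat.add_sub_cancel_left]

theorem stmt_11 {V : Type*} [Fintype V] (A : V → V → Prop) (hA : Acyclic A)
    (B D E M : Set V) (hM : IsDSep A B D E M)
    (x : V) (hx : x ∈ Casc A (B ∪ D ∪ M ∪ E)) :
    DSep A {x} B (M ∪ E) ∨ DSep A {x} D (M ∪ E) := by
  by_contra hcon
  push_neg at hcon
  obtain ⟨hB, hD⟩ := hcon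
  simp only [DSep, not_forall, not_not] at hB hD
  obtain ⟨nb, pb, hpb0, hpbB, hpbA⟩ := hB
  obtain ⟨nd, pd, hpd0, hpdD, hpdA⟩ := hD
  rw [Set.mem_singleton_iff] at hpb0 hpd0
  have hbd0 : pb 0 = pd 0 := by rw [hpb0, hpd0]
  obtain ⟨s, hs, hreach⟩ := hx
  obtain ⟨k, f, hf0, hfk, hfstep⟩ := exists_path_fun hreach
  by_cases hMpath : ∃ i ≤ k, f i ∈ M ∪ E
  · -- a descendant of x is in M ∪ E, so the collider case at x is fine
    obtain ⟨i, hik, hiM⟩ := hMpath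
    have hwit : (Cdsc A (pb 0) ∩ (M ∪ E)).Nonempty := by
      refine ⟨f i, ?_, hiM⟩
      rw [hpb0, ← hf0]
      exact path_reaches hfstep i hik
    have hact := concat_active hpbA hpdA hbd0 (fun _ _ _ _ => hwit)
    exact hM (nb + nd) _ (by rw [concat_start]; exact hpbB)
      (by rw [concat_end hbd0]; exact hpdD) hact
  · push_neg at hMpath
    have hsME : s ∉ M ∪ E := hfk ▸ hMpath k le_rfl
    have hsBD : s ∈ B ∪ D := by
      rcases hs with ((hBD | hMm) | hE)
      · exact hBD
      · exact absurd (Or.inl hMm) hsME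
      · exact absurd (Or.inr hE) hsME
    have hfact : ActiveTrail A (M ∪ E) k f := path_active hA hfstep hMpath
    rcases hsBD with hsB | hsD
    · -- trail: s (∈ B) up to x, then down to D
      have hnoc : 0 < k → 0 < nd → A (f 1) (f 0) → A (pd 1) (pd 0) →
          (Cdsc A (f 0) ∩ (M ∪ E)).Nonempty := by
        intro hk _ h1 _
        exact absurd (Relation.TransGen.head (hfstep 0 hk) (Relation.TransGen.single h1))
          (hA (f 0))
      have hact := concat_active hfact hpdA (by rw [hf0, hpd0]) hnoc
      exact hM (k + nd) _ (by rw [concat_start, hfk]; exact hsB)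
        (by rw [concat_end (by rw [hf0, hpd0])]; exact hpdD) hact
    · -- trail: B up to x, then down along the path to s (∈ D)
      have hnoc : 0 < nb → 0 < k → A (pb 1) (pb 0) → A (f 1) (f 0) →
          (Cdsc A (pb 0) ∩ (M ∪ E)).Nonempty := by
        intro _ hk _ h1
        exact absurd (Relation.TransGen.head (hfstep 0 hk) (Relation.TransGen.single h1))
          (hA (f 0))
      have hact := concat_active hpbA hfact (by rw [hf0, hpb0]) hnoc
      exact hM (nb + k) _ (by rw [concat_start]; exact hpbB)
        (by rw [concat_end (by rw [hf0, hpb0]), hfk]; exact hsD) hact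
end

section
/- Let G=(V,A) be a finite directed acyclic graph, let B, D, E be subsets of V, and let M be a d-separator between B and D given E. Then mb_M(B|E) is a d-separator between B and D given E. -/
lemma path_of_rtg {V : Type*} {A : V → V → Prop} {a b : V}
    (h : Relation.ReflTransGen A a b) :
    ∃ (l : ℕ) (p : ℕ → V), p 0 = a ∧ p l = b ∧ ∀ i < l, A (p i) (p (i+1)) := by
  induction h with
  | refl => exact ⟨0, fun _ => a, rfl, rfl, fun i hi => absurd hi (Nat.not_lt_zero i)⟩
  | @tail b c hab hbc ih =>
    obtain ⟨l, p, h0, hl, harc⟩ := ih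
    refine ⟨l+1, fun i => if i ≤ l then p i else c, ?_, ?_, ?_⟩
    · simp [h0]
    · simp
    · intro i hi
      rcases Nat.lt_or_ge i l with h1 | h1
      · simpa [Nat.le_of_lt h1, Nat.succ_le_of_lt h1] using harc i h1
      · have : i = l := by omega
        subst this
        simpa [hl] using hbc

lemma rtg_of_arcs {V : Type*} {A : V → V → Prop} (p : ℕ → V) (l : ℕ)
    (h : ∀ i < l, A (p i) (p (i+1))) : ∀ i ≤ l, Relation.ReflTransGen A (p 0) (p i) := by
  intro i
  induction i with
  | zero => exact fun _ => Relation.ReflTransGen.refl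
  | succ i ih => exact fun hi => (ih (by omega)).tail (h i (by omega))

theorem stmt_13 {V : Type*} [Fintype V] (A : V → V → Prop) (hA : Acyclic A)
    (B D E M : Set V) (hM : IsDSep A B D E M) :
    IsDSep A B D E (Mb A B M E) := by
  classical
  set M' := Mb A B M E with hM'def
  have hM'sub : M' ⊆ M := fun v hv => hv.1
  intro n f hfB hfD hact
  obtain ⟨htrail, hnc, hc⟩ := hact
  have hsub : M' ∪ E ⊆ M ∪ E := Set.union_subset_union_left E hM'sub
  have hnact : ¬ ActiveTrail A (M ∪ E) n f := hM n f hfB hfD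
  have hex : ∃ j, j ≤ n ∧ ¬ IsVStruct A n f j ∧ f j ∈ M ∪ E ∧ f j ∉ M' ∪ E := by
    by_contra hcon
    push_neg at hcon
    apply hnact
    refine ⟨htrail, ?_, ?_⟩
    · intro i hi hvs hmem
      exact hnc i hi hvs (hcon i hi hvs hmem)
    · intro i hi hvs
      obtain ⟨w, hw1, hw2⟩ := hc i hi hvs
      exact ⟨w, hw1, hsub hw2⟩
  set k := Nat.find hex with hkdef
  obtain ⟨hkn, hkvs, hkM, hkM'⟩ := Nat.find_spec hex
  have hmin : ∀ i < k, i ≤ n → ¬ IsVStruct A n f i → f i ∉ M' ∪ E → f i ∉ M ∪ E := by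
    intro i hik hin hivs hiM' hmem
    exact Nat.find_min hex hik ⟨hin, hivs, hmem, hiM'⟩
  have hzE : f k ∉ E := fun h => hkM' (Or.inr h)
  have hzM : f k ∈ M := hkM.resolve_right hzE
  have hzM' : f k ∉ M' := fun h => hkM' (Or.inl h)
  set Z := E ∪ (M \ (B ∪ {f k})) with hZdef
  have hZsub : Z ⊆ M ∪ E := by
    intro v hv
    rcases hv with hv | hv
    · exact Or.inr hv
    · exact Or.inl hv.1
  have hzZ : f k ∉ Z := by
    intro h
    rcases h with h | h
    · exact hzE h
    · exact h.2 (Or.inr rfl)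
  -- unified construction data
  have key : ∃ (m l : ℕ) (p : ℕ → V), m ≤ k ∧
      (∀ j, 0 < j → j < m → IsVStruct A n f (k-j) → (Cdsc A (f (k-j)) ∩ Z).Nonempty) ∧
      p 0 = f (k-m) ∧ (∀ i < l, A (p i) (p (i+1))) ∧ p l ∈ B ∧ (∀ i ≤ l, p i ∉ Z) := by
    by_cases hbad : ∃ j, 0 < j ∧ j < k ∧ IsVStruct A n f (k-j) ∧ (Cdsc A (f (k-j)) ∩ Z) = ∅
    · set m := Nat.find hbad with hmdef
      obtain ⟨hm0, hmk, hmvs, hmempty⟩ := Nat.find_spec hbad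
      have hgood : ∀ j, 0 < j → j < m → IsVStruct A n f (k-j) → (Cdsc A (f (k-j)) ∩ Z).Nonempty := by
        intro j hj0 hjm hjvs
        by_contra hne
        exact Nat.find_min hbad hjm ⟨hj0, by omega, hjvs, Set.not_nonempty_iff_eq_empty.mp hne⟩
      obtain ⟨w, hwc, hwZ'⟩ := hc (k-m) (by omega) hmvs
      have hwnotZ : w ∉ Z := fun h => Set.eq_empty_iff_forall_notMem.mp hmempty w ⟨hwc, h⟩
      have hwE : w ∉ E := fun h => hwnotZ (Or.inl h)
      have hwM' : w ∈ M' := hwZ'.resolve_right hwE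
      have hwB : w ∈ B := by
        have hBz : w ∈ B ∪ {f k} := by
          by_contra h
          exact hwnotZ (Or.inr ⟨hM'sub hwM', h⟩)
        rcases hBz with h | h
        · exact h
        · exact absurd (h ▸ hwM') hzM'
      obtain ⟨l, p, hp0, hpl, hparc⟩ := path_of_rtg hwc
      refine ⟨m, l, p, by omega, hgood, hp0, hparc, hpl ▸ hwB, ?_⟩
      intro i hi
      have := rtg_of_arcs p l hparc i hi
      rw [hp0] at this
      exact fun h => Set.eq_empty_iff_forall_notMem.mp hmempty (p i) ⟨this, h⟩
    · refine ⟨k, 0, fun _ => f 0, le_refl k, ?_, by rw [Nat.sub_self], ?_, hfB, ?_⟩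
      · intro j hj0 hjm hjvs
        by_contra hne
        exact hbad ⟨j, hj0, hjm, hjvs, Set.not_nonempty_iff_eq_empty.mp hne⟩
      · intro i hi; omega
      · intro i _
        have h0vs : ¬ IsVStruct A n f 0 := fun h => absurd h.1 (lt_irrefl 0)
        have h0 : f 0 ∉ M' ∪ E := hnc 0 (Nat.zero_le n) h0vs
        intro hmem
        rcases hmem with hmem | hmem
        · exact h0 (Or.inr hmem)
        · exact hmem.2 (Or.inl hfB)
  obtain ⟨m, l, p, hmk, hgood, hp0, hparc, hplB, hpZ⟩ := key
  set N := m + l with hNdef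
  set h : ℕ → V := fun j => if j ≤ m then f (k - j) else p (j - m) with hhdef
  have hhf : ∀ j ≤ m, h j = f (k - j) := fun j hj => if_pos hj
  have hhp : ∀ j, m ≤ j → h j = p (j - m) := by
    intro j hj
    rcases eq_or_lt_of_le hj with hj' | hj'
    · rw [← hj', hhf m (le_refl m), Nat.sub_self, hp0]
    · exact if_neg (by omega)
  have h0z : h 0 = f k := by rw [hhf 0 (Nat.zero_le m), Nat.sub_zero]
  -- the constructed trail is active given Z
  have hAT : ActiveTrail A Z N h := by
    refine ⟨?_, ?_, ?_⟩
    · -- IsTrail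
      intro j hj
      by_cases hjm : j + 1 ≤ m
      · have e1 : h j = f (k - j) := hhf j (by omega)
        have e2 : h (j+1) = f (k - j - 1) := hhf (j+1) hjm
        have ha := htrail (k - j - 1) (by omega)
        have e3 : k - j - 1 + 1 = k - j := by omega
        rw [e3] at ha
        rw [e1, e2]
        exact ha.symm
      · have e1 : h j = p (j - m) := hhp j (by omega)
        have e2 : h (j+1) = p (j - m + 1) := by
          rw [hhp (j+1) (by omega)]; congr 1; omega
        rw [e1, e2]
        exact Or.inl (hparc (j - m) (by omega))
    · -- non v-structures avoid Z
      intro j hjN hvs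
      by_cases hjm : m ≤ j
      · rw [hhp j hjm]
        exact hpZ (j - m) (by omega)
      · rcases Nat.eq_zero_or_pos j with hj0 | hj0
        · subst hj0; rw [h0z]; exact hzZ
        · have hfvs : ¬ IsVStruct A n f (k - j) := by
            intro hfvs
            obtain ⟨_, _, ha1, ha2⟩ := hfvs
            apply hvs
            refine ⟨hj0, by omega, ?_, ?_⟩
            · rw [hhf (j-1) (by omega)]
              have : k - (j-1) = k - j + 1 := by omega
              rw [this, hhf j (by omega)]
              exact ha2
            · rw [hhf (j+1) (by omega)]
              have : k - (j+1) = k - j - 1 := by omega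
              rw [this, hhf j (by omega)]
              exact ha1
          have h1 : f (k - j) ∉ M' ∪ E := hnc (k - j) (by omega) hfvs
          have h2 : f (k - j) ∉ M ∪ E := hmin (k - j) (by omega) (by omega) hfvs h1
          rw [hhf j (by omega)]
          exact fun hh => h2 (hZsub hh)
    · -- v-structures have descendants in Z
      intro j hjN hvs
      obtain ⟨hj0, hjN', ha1, ha2⟩ := hvs
      by_cases hjm : j < m
      · have hfvs : IsVStruct A n f (k - j) := by
          refine ⟨by omega, by omega, ?_, ?_⟩
          · have e : h (j+1) = f (k - j - 1) := hhf (j+1) (by omega)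
            rw [e, hhf j (by omega)] at ha2
            exact ha2
          · have e : h (j-1) = f (k - j + 1) := by
              rw [hhf (j-1) (by omega)]; congr 1; omega
            rw [e, hhf j (by omega)] at ha1
            exact ha1
        rw [hhf j (by omega)]
        exact hgood j hj0 hjm hfvs
      · exfalso
        have e1 : h j = p (j - m) := hhp j (by omega)
        have e2 : h (j+1) = p (j - m + 1) := by
          rw [hhp (j+1) (by omega)]; congr 1; omega
        rw [e1, e2] at ha2
        have hfwd : A (p (j - m)) (p (j - m + 1)) := hparc (j - m) (by omega)
        exact hA (p (j - m)) ((Relation.TransGen.single hfwd).tail ha2)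
  have hNB : h N ∈ B := by
    rw [hhp N (by omega)]
    have : N - m = l := by omega
    rw [this]
    exact hplB
  -- conclude : f k ∈ M', contradiction
  apply hzM'
  refine ⟨hzM, ?_⟩
  intro hdsep
  exact hdsep N h (h0z ▸ rfl) hNB hAT
end

section
/- Let G=(V,A) be a finite directed acyclic graph, let B, D, E be subsets of V, and let M and N be two d-separators between B and D given E. If N is a minimal d-separator between B and D given E and M is d-separated from D given N ∪ E, then B is d-separated from N given M ∪ E. -/
/-!
Suppose a walk from `B` reaches `v ∈ N` and is open given `M ∪ E`. Minimality of `N` gives a walk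
from `v` to `D` open given `N ∪ E`, whose non-colliders avoid `M` because `N ∪ E` separates `M`
from `D`. Their concatenation is open given `M ∪ E` except at closed colliders, i.e. colliders
without a descendant in `M ∪ E`; such a collider has a descendant in `N`. Closed colliders are
eliminated by induction on their number and then on the position of the first one, `c`, in the
order of `A`. Extending the walk down an arc out of `c` and straight back up moves the first closed
collider to a proper descendant of `c` in `N`, or yields a walk from `B` to `D` open given
`M ∪ E`. This works when `c ∉ N`; when `c ∈ N`, a witness of minimality at `c` provides either a
proper descendant in `N ∪ D` or a directed path from `c` down to `B`, and that path, read
backwards, replaces the part of the walk before `c`, which then is no longer a collider.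
-/

open Relation

/-- A walk in the skeleton of `A`; a step carries `true` when it follows its arc and `false` when
it runs against it. -/
inductive ArcWalk {V : Type*} (A : V → V → Prop) : V → V → Type _
  | nil (u : V) : ArcWalk A u u
  | cons {u v w : V} (fwd : Bool) (h : if fwd then A u v else A v u) (p : ArcWalk A v w) :
      ArcWalk A u w

namespace ArcWalk

variable {V : Type*} {A : V → V → Prop} {u v w : V}

def append : {u v w : V} → ArcWalk A u v → ArcWalk A v w → ArcWalk A u w
  | _, _, _, nil _, q => q
  | _, _, _, cons d h p, q => cons d h (p.append q)

def reverse : {u w : V} → ArcWalk A u w → ArcWalk A w u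
  | _, _, nil u => nil u
  | _, _, cons d h p => p.reverse.append (cons (!d) (by cases d <;> simpa using h) (nil _))

def firstDir : {u w : V} → ArcWalk A u w → Option Bool
  | _, _, nil _ => none
  | _, _, cons d _ _ => some d

/-- The direction of the step entering the last vertex, where `arr` is taken to be the direction
of the step entering the first one. -/
def lastArr : {u w : V} → ArcWalk A u w → Option Bool → Option Bool
  | _, _, nil _, arr => arr
  | _, _, cons d _ p, _ => p.lastArr (some d)

def length : {u w : V} → ArcWalk A u w → ℕ
  | _, _, nil _ => 0
  | _, _, cons _ _ p => p.length + 1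

def getVert : {u w : V} → ArcWalk A u w → ℕ → V
  | u, _, nil _, _ => u
  | u, _, cons _ _ _, 0 => u
  | _, _, cons _ _ p, i + 1 => p.getVert i

/-- `P arr x d` holds at every vertex `x` but the last, entered by a step of direction `arr` (the
argument, at the first vertex) and left by a step of direction `d`. -/
def AllPass (P : Option Bool → V → Bool → Prop) :
    {u w : V} → ArcWalk A u w → Option Bool → Prop
  | _, _, nil _, _ => True
  | u, _, cons d _ p, arr => P arr u d ∧ p.AllPass P (some d)

open Classical in
noncomputable def countPass (P : Option Bool → V → Bool → Prop) :
    {u w : V} → ArcWalk A u w → Option Bool → ℕ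
  | _, _, nil _, _ => 0
  | u, _, cons d _ p, arr => (if P arr u d then 1 else 0) + p.countPass P (some d)

variable {P Q : Option Bool → V → Bool → Prop}

lemma lastArr_append (p : ArcWalk A u v) (q : ArcWalk A v w) (arr : Option Bool) :
    (p.append q).lastArr arr = q.lastArr (p.lastArr arr) := by
  induction p generalizing arr with
  | nil => rfl
  | cons d h p ih => exact ih q _

lemma firstDir_append (p : ArcWalk A u v) (q : ArcWalk A v w) :
    (p.append q).firstDir = p.firstDir.or q.firstDir := by
  cases p <;> rfl

lemma lastArr_reverse (p : ArcWalk A u w) :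
    p.reverse.lastArr none = p.firstDir.map (!·) := by
  cases p with
  | nil => rfl
  | cons d h p => simp only [reverse, lastArr_append]; rfl

lemma firstDir_reverse (p : ArcWalk A u w) :
    p.reverse.firstDir = (p.lastArr none).map (!·) := by
  suffices h : ∀ arr, p.reverse.firstDir.or (arr.map (!·)) = (p.lastArr arr).map (!·) by
    simpa using h none
  induction p with
  | nil => intro arr; rfl
  | cons d h p ih =>
    intro arr
    simp only [reverse, firstDir_append, lastArr, ← ih (some d), Option.or_assoc]
    rfl

lemma allPass_append (p : ArcWalk A u v) (q : ArcWalk A v w) (arr : Option Bool) :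
    (p.append q).AllPass P arr ↔ p.AllPass P arr ∧ q.AllPass P (p.lastArr arr) := by
  induction p generalizing arr with
  | nil => simp [AllPass, append, lastArr]
  | cons d h p ih => simp [AllPass, append, lastArr, ih, and_assoc]

lemma countPass_append (p : ArcWalk A u v) (q : ArcWalk A v w) (arr : Option Bool) :
    (p.append q).countPass P arr = p.countPass P arr + q.countPass P (p.lastArr arr) := by
  induction p generalizing arr with
  | nil => simp [countPass, append, lastArr]
  | cons d h p ih => simp [countPass, append, lastArr, ih, Nat.add_assoc]

lemma AllPass.imp₂ {R : Option Bool → V → Bool → Prop}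
    (hPQR : ∀ a x d, P a x d → Q a x d → R a x d) {p : ArcWalk A u w}
    {arr : Option Bool} (hP : p.AllPass P arr) (hQ : p.AllPass Q arr) : p.AllPass R arr := by
  induction p generalizing arr with
  | nil => trivial
  | cons d _ p ih => exact ⟨hPQR _ _ _ hP.1 hQ.1, ih hP.2 hQ.2⟩

lemma AllPass.imp (hPQ : ∀ a x d, P a x d → Q a x d) {p : ArcWalk A u w}
    {arr : Option Bool} (h : p.AllPass P arr) : p.AllPass Q arr :=
  h.imp₂ (fun a x d hP _ => hPQ a x d hP) h

lemma AllPass.of_firstDir {p : ArcWalk A u w} {arr : Option Bool}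
    (h : p.AllPass P arr) (arr' : Option Bool) (h' : ∀ d, p.firstDir = some d → P arr' u d) :
    p.AllPass P arr' := by
  cases p with
  | nil => trivial
  | cons d _ p => exact ⟨h' d rfl, h.2⟩

lemma AllPass.reverse (hP : ∀ a x b, P (some a) x b → P (some !b) x !a)
    (hnone : ∀ x d, P none x d) (p : ArcWalk A u w) (arr : Option Bool)
    (h : p.AllPass P arr) : p.reverse.AllPass P none := by
  induction p generalizing arr with
  | nil => trivial
  | cons d _ p ih =>
    refine (allPass_append _ _ _).2 ⟨ih _ h.2, ?_, trivial⟩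
    rw [lastArr_reverse]
    cases p with
    | nil => exact hnone _ _
    | cons d' _ _ => exact hP _ _ _ h.2.1

lemma countPass_eq_zero {p : ArcWalk A u w} {arr : Option Bool}
    (h : p.AllPass (fun a x d => ¬ P a x d) arr) : p.countPass P arr = 0 := by
  induction p generalizing arr with
  | nil => rfl
  | cons d _ p ih => simp [countPass, h.1, ih h.2]

lemma allPass_or_split_first (P : Option Bool → V → Bool → Prop) (p : ArcWalk A u w)
    (arr : Option Bool) :
    p.AllPass (fun a x d => ¬ P a x d) arr ∨
      ∃ (x y : V) (d : Bool) (h : if d then A x y else A y x) (p₁ : ArcWalk A u x)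
        (p₂ : ArcWalk A y w), p = p₁.append (cons d h p₂) ∧
        p₁.AllPass (fun a x d => ¬ P a x d) arr ∧ P (p₁.lastArr arr) x d := by
  induction p generalizing arr with
  | nil => exact .inl trivial
  | @cons u v w d h p ih =>
    by_cases hP : P arr u d
    · exact .inr ⟨u, v, d, h, nil u, p, rfl, trivial, hP⟩
    · rcases ih (some d) with hp | ⟨x, y, d', h', p₁, p₂, rfl, hp₁, hx⟩
      · exact .inl ⟨hP, hp⟩
      · exact .inr ⟨x, y, d', h', cons d h p₁, p₂, rfl, ⟨hP, hp₁⟩, hx⟩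

lemma allPass_or_split_last (P : Option Bool → V → Bool → Prop) (p : ArcWalk A u w)
    (arr : Option Bool) :
    p.AllPass (fun a x d => ¬ P a x d) arr ∨
      ∃ (x y : V) (d : Bool) (h : if d then A x y else A y x) (p₁ : ArcWalk A u x)
        (p₂ : ArcWalk A y w), p = p₁.append (cons d h p₂) ∧
        P (p₁.lastArr arr) x d ∧ p₂.AllPass (fun a x d => ¬ P a x d) (some d) := by
  induction p generalizing arr with
  | nil => exact .inl trivial
  | @cons u v w d h p ih =>
    rcases ih (some d) with hp | ⟨x, y, d', h', p₁, p₂, rfl, hx, hp₂⟩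
    · by_cases hP : P arr u d
      · exact .inr ⟨u, v, d, h, nil u, p, rfl, hP, hp⟩
      · exact .inl ⟨hP, hp⟩
    · exact .inr ⟨x, y, d', h', cons d h p₁, p₂, rfl, hx, hp₂⟩

/-- The walk is open at `x`, entered by a step of direction `arr` (`none` at the first vertex) and
left by one of direction `d`: a collider (`some true`, `false`) needs a descendant in `Zcol`, any
other vertex must avoid `Znc`. -/
def Passes (A : V → V → Prop) (Znc Zcol : Set V) : Option Bool → V → Bool → Prop
  | none, _, _ => True
  | some true, x, false => (Cdsc A x ∩ Zcol).Nonempty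
  | some _, x, _ => x ∉ Znc

def IsNonColliderIn (S : Set V) (arr : Option Bool) (x : V) (d : Bool) : Prop :=
  x ∈ S ∧ arr ≠ none ∧ ¬ (arr = some true ∧ d = false)

def IsClosedCollider (A : V → V → Prop) (Z : Set V) (arr : Option Bool) (x : V) (d : Bool) :
    Prop :=
  arr = some true ∧ d = false ∧ ¬ (Cdsc A x ∩ Z).Nonempty

section Passes

variable {Znc Zcol : Set V} {arr : Option Bool} {x : V} {d : Bool}

lemma passes_none : Passes A Znc Zcol none x d := trivial

lemma Passes.mono {Znc' Zcol' : Set V} (hnc : Znc' ⊆ Znc) (hcol : Zcol ⊆ Zcol')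
    (h : Passes A Znc Zcol arr x d) : Passes A Znc' Zcol' arr x d := by
  match arr, d with
  | none, _ => trivial
  | some true, false => exact Set.Nonempty.mono (Set.inter_subset_inter_right _ hcol) h
  | some true, true | some false, _ => exact fun hx => h (hnc hx)

lemma Passes.of_mem (hx : x ∈ Zcol) (hx' : x ∉ Znc) : Passes A Znc Zcol arr x d := by
  match arr, d with
  | none, _ => trivial
  | some true, false => exact ⟨x, .refl, hx⟩
  | some true, true | some false, _ => exact hx'

lemma Passes.flip {a b : Bool} (h : Passes A Znc Zcol (some a) x b) :
    Passes A Znc Zcol (some !b) x !a := by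
  cases a <;> cases b <;> exact h

lemma Passes.union {S : Set V} (h : Passes A Znc Zcol arr x d)
    (hS : ¬ IsNonColliderIn S arr x d) : Passes A (Znc ∪ S) Zcol arr x d := by
  rcases arr with _ | _ | _ <;> cases d <;> simp_all [Passes, IsNonColliderIn]

lemma Passes.of_not_isClosedCollider {Z : Set V} (h : Passes A Znc Zcol arr x d)
    (hZ : ¬ IsClosedCollider A Z arr x d) : Passes A Znc Z arr x d := by
  rcases arr with _ | _ | _ <;> cases d <;> simp_all [Passes, IsClosedCollider]

lemma Passes.notMem_of_isNonColliderIn {S : Set V} (h : Passes A Znc Zcol arr x d)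
    (hS : IsNonColliderIn S arr x d) : x ∉ Znc := by
  rcases arr with _ | _ | _ <;> cases d <;> simp_all [Passes, IsNonColliderIn]

lemma AllPass.reverse_passes {p : ArcWalk A u w} (h : p.AllPass (Passes A Znc Zcol) arr) :
    p.reverse.AllPass (Passes A Znc Zcol) none :=
  AllPass.reverse (fun _ _ _ => Passes.flip) (fun _ _ => trivial) p arr h

lemma AllPass.append_of_mem {p : ArcWalk A u v} {q : ArcWalk A v w}
    (hp : p.AllPass (Passes A Znc Zcol) none) (hq : q.AllPass (Passes A Znc Zcol) none)
    (hv : v ∈ Zcol) (hvZ : v ∉ Znc) : (p.append q).AllPass (Passes A Znc Zcol) none :=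
  (allPass_append _ _ _).2 ⟨hp, hq.of_firstDir _ fun _ _ => Passes.of_mem hv hvZ⟩

/-- Following an open walk from its first step as long as the steps go down the arcs, one reaches
a collider, hence a descendant in `Zcol`, or the end of the walk. -/
lemma exists_transGen_of_firstDir {q : ArcWalk A u w} (hq : q.AllPass (Passes A Znc Zcol) arr)
    (hd : q.firstDir = some true) :
    ∃ z, TransGen A u z ∧ (z ∈ Zcol ∨ z = w) := by
  induction q generalizing arr with
  | nil => cases hd
  | cons d h q ih =>
    cases hd
    cases q with
    | nil => exact ⟨_, .single h, .inr rfl⟩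
    | cons d' h' q' =>
      cases d'
      · obtain ⟨z, hz, hzZ⟩ : (Cdsc A _ ∩ Zcol).Nonempty := hq.2.1
        exact ⟨z, .head' h hz, .inl hzZ⟩
      · obtain ⟨z, hz, hzZ⟩ := ih hq.2 rfl
        exact ⟨z, .head h hz, hzZ⟩

end Passes

lemma getVert_zero (p : ArcWalk A u w) : p.getVert 0 = u := by
  cases p <;> rfl

lemma getVert_length (p : ArcWalk A u w) : p.getVert p.length = w := by
  induction p with
  | nil => rfl
  | cons _ _ p ih => exact ih

lemma isTrail_getVert (p : ArcWalk A u w) : IsTrail A p.length p.getVert := by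
  induction p with
  | nil => intro i hi; cases hi
  | cons d h p ih =>
    rintro (_ | i) hi
    · simp only [getVert, getVert_zero]
      cases d
      · exact .inr h
      · exact .inl h
    · exact ih i (Nat.lt_of_succ_lt_succ hi)

lemma exists_getVert_eq {n : ℕ} {f : ℕ → V} (h : IsTrail A n f) :
    ∃ p : ArcWalk A (f 0) (f n), p.length = n ∧ ∀ i ≤ n, p.getVert i = f i := by
  induction n generalizing f with
  | zero => exact ⟨nil _, rfl, fun i hi => by simp [getVert, Nat.le_zero.1 hi]⟩
  | succ n ih =>
    obtain ⟨p, hlen, hp⟩ := ih (f := fun i => f (i + 1)) fun i hi => h (i + 1) (by omega)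
    obtain ⟨d, hd⟩ : ∃ d : Bool, if d then A (f 0) (f 1) else A (f 1) (f 0) := by
      rcases h 0 (Nat.succ_pos n) with h0 | h0
      exacts [⟨true, h0⟩, ⟨false, h0⟩]
    refine ⟨cons d hd p, by simp [length, hlen], ?_⟩
    rintro (_ | i) hi
    · rfl
    · exact hp i (by omega)

end ArcWalk

section Trails

variable {V : Type*} {A : V → V → Prop} {u w : V}

def ActiveInterior (A : V → V → Prop) (Z : Set V) (n : ℕ) (f : ℕ → V) : Prop :=
  ∀ i, 0 < i → i < n →
    (IsVStruct A n f i → (Cdsc A (f i) ∩ Z).Nonempty) ∧ (¬ IsVStruct A n f i → f i ∉ Z)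

lemma activeTrail_iff_s19 {Z : Set V} {n : ℕ} {f : ℕ → V} :
    ActiveTrail A Z n f ↔
      IsTrail A n f ∧ f 0 ∉ Z ∧ f n ∉ Z ∧ ActiveInterior A Z n f := by
  constructor
  · rintro ⟨ht, hnc, hc⟩
    exact ⟨ht, hnc 0 (Nat.zero_le n) fun hv => lt_irrefl 0 hv.1,
      hnc n le_rfl fun hv => lt_irrefl n hv.2.1,
      fun i _ hin => ⟨hc i hin.le, hnc i hin.le⟩⟩
  · rintro ⟨ht, h0, hn, hi⟩
    refine ⟨ht, fun i hin hv => ?_, fun i _ hv => (hi i hv.1 hv.2.1).1 hv⟩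
    rcases Nat.eq_zero_or_pos i with rfl | hi0
    · exact h0
    rcases hin.lt_or_eq with hin | rfl
    · exact (hi i hi0 hin).2 hv
    · exact hn

lemma activeTrail_congr {Z : Set V} {n : ℕ} {f g : ℕ → V} (h : ∀ i ≤ n, f i = g i) :
    ActiveTrail A Z n f ↔ ActiveTrail A Z n g := by
  have hv : ∀ i ≤ n, IsVStruct A n f i ↔ IsVStruct A n g i := fun i hi => by
    unfold IsVStruct
    by_cases hin : 0 < i ∧ i < n
    · rw [h (i - 1) (by omega), h i hi, h (i + 1) hin.2]
    · tauto
  simp only [ActiveTrail, IsTrail]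
  refine and_congr (forall₂_congr fun i hi => ?_) (and_congr (forall₂_congr fun i hi => ?_)
    (forall₂_congr fun i hi => ?_))
  · rw [h i hi.le, h (i + 1) hi]
  · rw [hv i hi, h i hi]
  · rw [hv i hi, h i hi]

lemma isVStruct_succ {n i : ℕ} {f : ℕ → V} (hi : 0 < i) :
    IsVStruct A (n + 1) f (i + 1) ↔ IsVStruct A n (fun j => f (j + 1)) i := by
  obtain ⟨j, rfl⟩ := Nat.exists_eq_add_of_lt hi
  simp [IsVStruct]

lemma activeInterior_succ {Z : Set V} {n : ℕ} {f : ℕ → V} :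
    ActiveInterior A Z (n + 1) f ↔
      (0 < n → (IsVStruct A (n + 1) f 1 → (Cdsc A (f 1) ∩ Z).Nonempty) ∧
        (¬ IsVStruct A (n + 1) f 1 → f 1 ∉ Z)) ∧
      ActiveInterior A Z n (fun j => f (j + 1)) := by
  constructor
  · intro h
    refine ⟨fun hn => h 1 one_pos (by omega), fun i hi hin => ?_⟩
    simpa only [isVStruct_succ hi] using h (i + 1) (by omega) (by omega)
  · rintro ⟨h1, h⟩ (_ | _ | i) hi hin
    · cases hi
    · exact h1 (by omega)
    · simpa only [isVStruct_succ (Nat.succ_pos i)] using h (i + 1) (Nat.succ_pos i) (by omega)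

namespace ArcWalk

/-- In a DAG the position of the arcs at an interior vertex of a walk decides whether it is a
v-structure, so the active-trail conditions are exactly the pass conditions. -/
lemma activeInterior_getVert_iff (hA : Acyclic A) {Z : Set V} (p : ArcWalk A u w) :
    ActiveInterior A Z p.length p.getVert ↔ p.AllPass (Passes A Z Z) none := by
  induction p with
  | nil => exact ⟨fun _ => trivial, fun _ i _ hin => by simp [length] at hin⟩
  | @cons u v w d h p ih =>
    cases p with
    | nil =>
      exact ⟨fun _ => ⟨trivial, trivial⟩, fun _ i hi hin => by simp [length] at hin; omega⟩
    | @cons _ v' _ d' h' p' =>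
      have hanti : ∀ {x y : V}, A x y → ¬ A y x := fun h1 h2 => hA _ (.head h1 (.single h2))
      refine (activeInterior_succ (n := (cons d' h' p').length)).trans ?_
      change _ ∧ ActiveInterior A Z _ (cons d' h' p').getVert ↔ _
      rw [ih]
      simp only [AllPass, passes_none, true_and]
      refine and_congr ?_ .rfl
      simp only [IsVStruct, getVert, getVert_zero, length]
      cases d <;> cases d' <;> simp only [Bool.false_eq_true, ite_true, ite_false] at h h' <;>
        simp [Passes, getVert_zero, h, h', hanti h, hanti h']

lemma activeTrail_getVert_iff (hA : Acyclic A) {Z : Set V} (p : ArcWalk A u w) :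
    ActiveTrail A Z p.length p.getVert ↔
      u ∉ Z ∧ w ∉ Z ∧ p.AllPass (Passes A Z Z) none := by
  rw [activeTrail_iff_s19, p.activeInterior_getVert_iff hA, p.getVert_zero, p.getVert_length]
  simp [p.isTrail_getVert]

end ArcWalk

theorem dsep_iff (hA : Acyclic A) {X Y Z : Set V} :
    DSep A X Y Z ↔ ∀ u ∈ X, ∀ w ∈ Y, u ∉ Z → w ∉ Z →
      ∀ p : ArcWalk A u w, ¬ p.AllPass (ArcWalk.Passes A Z Z) none := by
  constructor
  · intro h u hu w hw huZ hwZ p hp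
    exact h p.length p.getVert (by rwa [p.getVert_zero]) (by rwa [p.getVert_length])
      ((p.activeTrail_getVert_iff hA).2 ⟨huZ, hwZ, hp⟩)
  · intro h n f hf0 hfn hact
    obtain ⟨p, hlen, hp⟩ := ArcWalk.exists_getVert_eq hact.1
    rw [← hlen] at hact
    obtain ⟨h0, hn, hpass⟩ := (p.activeTrail_getVert_iff hA).1
      ((activeTrail_congr fun i hi => (hp i (hlen ▸ hi)).symm).1 hact)
    exact h _ hf0 _ hfn h0 hn p hpass

end Trails

open ArcWalk

lemma Acyclic.wellFounded_transGen {V : Type*} [Finite V] {A : V → V → Prop} (hA : Acyclic A) :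
    WellFounded (fun y x => TransGen A x y) :=
  haveI : IsTrans V (fun y x => TransGen A x y) := ⟨fun _ _ _ h₁ h₂ => h₂.trans h₁⟩
  haveI : Std.Irrefl (fun y x => TransGen A x y) := ⟨hA⟩
  Finite.wellFounded_of_trans_of_irrefl _

section MinimalSeparator

variable {V : Type*} {A : V → V → Prop} {B D E N : Set V} {u w v : V}

lemma ArcWalk.AllPass.of_sdiff_singleton (hvN : v ∈ N)
    {p : ArcWalk A u w} {arr : Option Bool}
    (hp : p.AllPass (Passes A (N \ {v} ∪ E) (N \ {v} ∪ E)) arr)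
    (hv : p.AllPass (fun a x e => ¬ IsNonColliderIn {v} a x e) arr) :
    p.AllPass (Passes A (N ∪ E) (N ∪ E)) arr :=
  (hp.imp₂ (fun _ _ _ h₁ h₂ => h₁.union h₂) hv).imp fun _ _ _ h =>
    h.mono (fun x hx => by by_cases x = v <;> simp_all)
      (Set.union_subset_union_left _ Set.sdiff_subset)

lemma IsMinDSep.exists_walk_through (hA : Acyclic A) (hN : IsMinDSep A B D E N) (hvN : v ∈ N)
    (hvD : v ∉ D) :
    ∃ b ∈ B, ∃ d ∈ D, d ∉ N ∪ E ∧ ∃ p : ArcWalk A b d,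
      p.AllPass (Passes A (N \ {v} ∪ E) (N \ {v} ∪ E)) none ∧
      (p.AllPass (fun a x e => ¬ IsNonColliderIn {v} a x e) none → b = v) := by
  have hnot := hN.2 _ (Set.sdiff_singleton_ssubset.2 hvN)
  simp only [IsDSep, dsep_iff hA, not_forall, not_not] at hnot
  obtain ⟨b, hb, d, hd, hbZ, hdZ, p, hp⟩ := hnot
  have hdZ' : d ∉ N ∪ E := by
    have : d ≠ v := fun h => hvD (h ▸ hd)
    simp_all
  refine ⟨b, hb, d, hd, hdZ', p, hp, fun hfree => ?_⟩
  by_contra hbv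
  exact (dsep_iff hA).1 hN.1 b hb d hd (by simp_all) hdZ' p
    (hp.of_sdiff_singleton hvN hfree)

lemma IsMinDSep.exists_transGen_or_reflTransGen (hA : Acyclic A) (hN : IsMinDSep A B D E N)
    (hvN : v ∈ N) (hvD : v ∉ D) :
    (∃ y, TransGen A v y ∧ y ∈ N ∪ E ∪ D) ∨ ∃ b ∈ B, ReflTransGen A v b := by
  obtain ⟨b, hb, d, hd, -, p, hp, hbv⟩ := hN.exists_walk_through hA hvN hvD
  have hZ : N \ {v} ∪ E ⊆ N ∪ E := Set.union_subset_union_left _ Set.sdiff_subset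
  rcases allPass_or_split_last (IsNonColliderIn {v}) p none with
    hfree | ⟨x, y, e, h, p₁, p₂, rfl, ⟨rfl, hne, hnc⟩, -⟩
  · exact .inr ⟨b, hb, hbv hfree ▸ .refl⟩
  obtain ⟨hp₁, hp₂⟩ := (allPass_append _ _ _).1 hp
  cases e
  · have hlast : p₁.lastArr none = some false := by
      rcases h' : p₁.lastArr none with _ | _ | _ <;> simp_all
    obtain ⟨z, hz, hzZ | rfl⟩ :=
      exists_transGen_of_firstDir hp₁.reverse_passes (by rw [firstDir_reverse, hlast]; rfl)
    · exact .inl ⟨z, hz, .inl (hZ hzZ)⟩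
    · exact .inr ⟨z, hb, hz.to_reflTransGen⟩
  · obtain ⟨z, hz, hzZ | rfl⟩ := exists_transGen_of_firstDir hp₂ rfl
    · exact .inl ⟨z, hz, .inl (hZ hzZ)⟩
    · exact .inl ⟨z, hz, .inr hd⟩

lemma allPass_union_of_dsep (hA : Acyclic A) {M Z : Set V} (hsep : DSep A M D Z) {d : V}
    (hd : d ∈ D) (hdZ : d ∉ Z) {q : ArcWalk A u d} (hq : q.AllPass (Passes A Z Z) none) :
    q.AllPass (Passes A (Z ∪ M) Z) none := by
  rcases allPass_or_split_last (IsNonColliderIn M) q none with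
    hfree | ⟨x, y, e, h, q₁, q₂, rfl, hx, -⟩
  · exact hq.imp₂ (fun _ _ _ h₁ h₂ => h₁.union h₂) hfree
  obtain ⟨-, hq₂⟩ := (allPass_append _ _ _).1 hq
  exact absurd ⟨trivial, hq₂.2⟩ ((dsep_iff hA).1 hsep x hx.1 d hd
    (hq₂.1.notMem_of_isNonColliderIn hx) hdZ (cons e h q₂))

lemma IsMinDSep.exists_walk_from (hA : Acyclic A) (hN : IsMinDSep A B D E N) {M : Set V}
    (hsep : DSep A M D (N ∪ E)) (hvN : v ∈ N) (hvD : v ∉ D) :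
    ∃ d ∈ D, d ∉ M ∪ E ∧
      ∃ q : ArcWalk A v d, q.AllPass (Passes A (M ∪ E) (N ∪ E)) none := by
  obtain ⟨b, -, d, hd, hdZ, p, hp, hbv⟩ := hN.exists_walk_through hA hvN hvD
  have hdM : d ∉ M := fun hdM => (dsep_iff hA).1 hsep d hdM d hd hdZ hdZ (nil d) trivial
  obtain ⟨q, hq⟩ : ∃ q : ArcWalk A v d, q.AllPass (Passes A (N ∪ E) (N ∪ E)) none := by
    rcases allPass_or_split_last (IsNonColliderIn {v}) p none with
      hfree | ⟨x, y, e, h, p₁, p₂, rfl, ⟨rfl, -⟩, hfree⟩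
    · obtain rfl := hbv hfree
      exact ⟨p, hp.of_sdiff_singleton hvN hfree⟩
    · obtain ⟨-, -, hp₂⟩ := (allPass_append _ _ _).1 hp
      exact ⟨cons e h p₂, trivial, hp₂.of_sdiff_singleton hvN hfree⟩
  refine ⟨d, hd, fun h => h.elim hdM fun hE => hdZ (.inr hE), q,
    (allPass_union_of_dsep hA hsep hd hdZ hq).imp fun _ _ _ h => h.mono
      (Set.union_subset Set.subset_union_right (Set.subset_union_right.trans Set.subset_union_left))
      subset_rfl⟩

end MinimalSeparator

section ClosedColliders

variable {V : Type*} {A : V → V → Prop} {B D E N Z : Set V}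

def EntersByArc (A : V → V → Prop) (B Z : Set V) (c : V) : Prop :=
  ∃ b ∈ B, b ∉ Z ∧ ∃ p : ArcWalk A b c,
    p.AllPass (Passes A Z Z) none ∧ p.lastArr none = some true

def ExitsAgainstArc (A : V → V → Prop) (D Z N : Set V) (c : V) (r : ℕ) : Prop :=
  ∃ d ∈ D, d ∉ Z ∧ ∃ q : ArcWalk A c d, q.AllPass (Passes A Z (Z ∪ N)) none ∧
    q.firstDir = some false ∧ q.countPass (IsClosedCollider A Z) none = r

/-- `c` is the first closed collider of a walk from `B` to `D` that is open given `Z` except at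
colliders having a descendant in `N`, and `r` closed colliders follow it. -/
def IsFirstClosedCollider (A : V → V → Prop) (B D Z N : Set V) (c : V) (r : ℕ) : Prop :=
  EntersByArc A B Z c ∧ ExitsAgainstArc A D Z N c r ∧ ¬ (Cdsc A c ∩ Z).Nonempty ∧
    (Cdsc A c ∩ N).Nonempty

lemma EntersByArc.notMem (hA : Acyclic A) (hZ : DSep A B D Z) {c : V}
    (h : EntersByArc A B Z c) (hc : c ∉ Z) : c ∉ D := fun hcD => by
  obtain ⟨b, hb, hbZ, p, hp, -⟩ := h
  exact (dsep_iff hA).1 hZ b hb c hcD hbZ hc p hp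

lemma EntersByArc.step {c c' : V} (h : EntersByArc A B Z c) (hc : c ∉ Z) (hcc' : A c c') :
    EntersByArc A B Z c' := by
  obtain ⟨b, hb, hbZ, p, hp, hlast⟩ := h
  refine ⟨b, hb, hbZ, p.append (cons true hcc' (nil c')), ?_, ?_⟩
  · exact (allPass_append _ _ _).2 ⟨hp, by rw [hlast]; exact ⟨hc, trivial⟩⟩
  · rw [lastArr_append, hlast]; rfl

lemma ExitsAgainstArc.step {c c' : V} {r : ℕ} (h : ExitsAgainstArc A D Z N c r) (hc : c ∉ Z)
    (hcc' : A c c') : ExitsAgainstArc A D Z N c' r := by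
  obtain ⟨d, hd, hdZ, q, hq, hfirst, rfl⟩ := h
  cases q with
  | nil => cases hfirst
  | cons e h q =>
    cases hfirst
    refine ⟨d, hd, hdZ, cons false hcc' (cons false h q), ⟨trivial, hc, hq.2⟩, rfl, ?_⟩
    simp [countPass, IsClosedCollider]

lemma EntersByArc.of_reflTransGen {c y : V} (h : EntersByArc A B Z c)
    (hcZ : ¬ (Cdsc A c ∩ Z).Nonempty) (hcy : ReflTransGen A c y) : EntersByArc A B Z y := by
  induction hcy with
  | refl => exact h
  | tail hcb hby ih => exact ih.step (fun hb => hcZ ⟨_, hcb, hb⟩) hby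

lemma ExitsAgainstArc.of_reflTransGen {c y : V} {r : ℕ} (h : ExitsAgainstArc A D Z N c r)
    (hcZ : ¬ (Cdsc A c ∩ Z).Nonempty) (hcy : ReflTransGen A c y) :
    ExitsAgainstArc A D Z N y r := by
  induction hcy with
  | refl => exact h
  | tail hcb hby ih => exact ih.step (fun hb => hcZ ⟨_, hcb, hb⟩) hby

lemma exists_isFirstClosedCollider (hA : Acyclic A) (hZ : DSep A B D Z) {b d : V} (hb : b ∈ B)
    (hbZ : b ∉ Z) (hd : d ∈ D) (hdZ : d ∉ Z) (p : ArcWalk A b d)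
    (hp : p.AllPass (Passes A Z (Z ∪ N)) none) :
    ∃ c r, r < p.countPass (IsClosedCollider A Z) none ∧
      IsFirstClosedCollider A B D Z N c r := by
  rcases allPass_or_split_first (IsClosedCollider A Z) p none with
    hfree | ⟨c, y, e, h, p₁, p₂, rfl, hfree, hc, rfl, hcZ⟩
  · exact absurd (hp.imp₂ (fun _ _ _ h₁ h₂ => h₁.of_not_isClosedCollider h₂) hfree)
      ((dsep_iff hA).1 hZ b hb d hd hbZ hdZ p)
  obtain ⟨hp₁, hcoll, hp₂⟩ := (allPass_append _ _ _).1 hp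
  rw [hc] at hcoll
  obtain ⟨z, hcz, hzZ | hzN⟩ : (Cdsc A c ∩ (Z ∪ N)).Nonempty := hcoll
  · exact absurd ⟨z, hcz, hzZ⟩ hcZ
  have hp₁' := hp₁.imp₂ (fun _ _ _ h₁ h₂ => h₁.of_not_isClosedCollider h₂) hfree
  refine ⟨c, _, ?_, ⟨b, hb, hbZ, p₁, hp₁', hc⟩,
    ⟨d, hd, hdZ, cons false h p₂, ⟨trivial, hp₂⟩, rfl, rfl⟩, hcZ, z, hcz, hzN⟩
  rw [countPass_append, countPass_eq_zero hfree, hc]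
  simp [countPass, IsClosedCollider, hcZ]

lemma not_isFirstClosedCollider [Finite V] (hA : Acyclic A) (hZ : DSep A B D Z) (hEZ : E ⊆ Z)
    (hN : IsMinDSep A B D E N) (r : ℕ) (c : V) : ¬ IsFirstClosedCollider A B D Z N c r := by
  induction r using Nat.strong_induction_on generalizing c with
  | _ r ihr =>
  induction c using hA.wellFounded_transGen.induction with
  | _ c ihc =>
  rintro ⟨hent, hexit, hcZ, z, hcz, hzN⟩
  have hcD : c ∉ D := hent.notMem hA hZ fun h => hcZ ⟨c, .refl, h⟩
  have hdesc : (∃ y, TransGen A c y ∧ y ∈ N ∪ D) ∨ ∃ b ∈ B, ReflTransGen A c b := by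
    rcases reflTransGen_iff_eq_or_transGen.1 hcz with rfl | hcz
    · rcases hN.exists_transGen_or_reflTransGen hA hzN hcD with ⟨y, hy, (hyN | hyE) | hyD⟩ | h
      · exact .inl ⟨y, hy, .inl hyN⟩
      · exact absurd ⟨y, hy.to_reflTransGen, hEZ hyE⟩ hcZ
      · exact .inl ⟨y, hy, .inr hyD⟩
      · exact .inr h
    · exact .inl ⟨z, hcz, .inl hzN⟩
  rcases hdesc with ⟨y, hcy, hy⟩ | ⟨b, hb, hcb⟩
  · have hyZ : ¬ (Cdsc A y ∩ Z).Nonempty := fun ⟨x, hx, hxZ⟩ =>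
      hcZ ⟨x, hcy.to_reflTransGen.trans hx, hxZ⟩
    have hent' := hent.of_reflTransGen hcZ hcy.to_reflTransGen
    rcases hy with hyN | hyD
    · exact ihc y hcy
        ⟨hent', hexit.of_reflTransGen hcZ hcy.to_reflTransGen, hyZ, y, .refl, hyN⟩
    · exact hent'.notMem hA hZ (fun h => hyZ ⟨y, .refl, h⟩) hyD
  · obtain ⟨d, hd, hdZ, q, hq, -, rfl⟩ := hexit.of_reflTransGen hcZ hcb
    obtain ⟨c', r', hr', hc'⟩ :=
      exists_isFirstClosedCollider hA hZ hb (fun h => hcZ ⟨b, hcb, h⟩) hd hdZ q hq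
    exact ihr r' hr' c' hc'

end ClosedColliders

theorem stmt_19 {V : Type*} [Fintype V] (A : V → V → Prop) (hA : Acyclic A)
    (B D E M N : Set V) (hM : IsDSep A B D E M) (hN : IsMinDSep A B D E N)
    (h : DSep A M D (N ∪ E)) :
    DSep A B N (M ∪ E) := by
  rw [dsep_iff hA]
  intro b hb v hvN hbZ hvZ p hp
  have hvD : v ∉ D := fun hvD => (dsep_iff hA).1 hM b hb v hvD hbZ hvZ p hp
  obtain ⟨d, hd, hdZ, q, hq⟩ := hN.exists_walk_from hA h hvN hvD
  have hpq : (p.append q).AllPass (Passes A (M ∪ E) (M ∪ E ∪ N)) none :=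
    (hp.imp fun _ _ _ h => h.mono subset_rfl Set.subset_union_left).append_of_mem
      (hq.imp fun _ _ _ h => h.mono subset_rfl (Set.union_subset Set.subset_union_right
        (Set.subset_union_right.trans Set.subset_union_left))) (.inr hvN) hvZ
  obtain ⟨c, r, -, hc⟩ := exists_isFirstClosedCollider hA hM hb hbZ hd hdZ _ hpq
  exact not_isFirstClosedCollider hA hM Set.subset_union_right hN r c hc
end
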